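/- arXiv:2410.14593 — 12 statements merged into one kernel-verified Lean document; each statement's English description precedes it below -/
import Mathlib

section
/- Let N be a set of n agents, and let O be a set of m indivisible items arriving over T rounds, with O_t the (possibly multi-element) set of items arriving at round t. Consider the transformed instance in which the same m items arrive one per round, in an order consistent with the original round structure (items from earlier rounds precede items from later rounds). If the transformed single-item-per-round instance admits a TEF1 allocation, then the original multi-item-per-round instance admits a TEF1 allocation. -/
open Finset

/-- The bundle of agent `i` within available item set `S`, under allocation `A`. -/
def bundle {n m : ℕ} (A : Fin m → Fin n) (S : Finset (Fin m)) (i : Fin n) : Finset (Fin m) :=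
  S.filter (fun j => A j = i)

/-- Additive value of a bundle. -/
def bval {m : ℕ} (v : Fin m → ℝ) (B : Finset (Fin m)) : ℝ := ∑ j ∈ B, v j

/-- EF1 for goods of the allocation `A` restricted to the item set `S`. -/
def EF1goods {n m : ℕ} (v : Fin n → Fin m → ℝ) (A : Fin m → Fin n) (S : Finset (Fin m)) : Prop :=
  ∀ i j : Fin n, bundle A S j = ∅ ∨
    ∃ g ∈ bundle A S j, bval (v i) (bundle A S i) ≥ bval (v i) ((bundle A S j).erase g)

/-- If the transformed single-item-per-round instance (items arriving one per round,
in an order consistent with the original rounds, i.e. the round map `ρ` is monotone)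
admits a TEF1 allocation, then the original multi-item-per-round instance does too. -/
theorem stmt0 (n m T : ℕ) (v : Fin n → Fin m → ℝ) (hv : ∀ i j, 0 ≤ v i j)
    (ρ : Fin m → Fin T) (hρ : Monotone ρ)
    (h : ∃ A : Fin m → Fin n, ∀ t : Fin m,
      EF1goods v A (Finset.univ.filter (fun j => j ≤ t))) :
    ∃ B : Fin m → Fin n, ∀ t : Fin T,
      EF1goods v B (Finset.univ.filter (fun j => ρ j ≤ t)) := by
  obtain ⟨A, hA⟩ := h
  refine ⟨A, fun t => ?_⟩
  set S : Finset (Fin m) := Finset.univ.filter (fun j => ρ j ≤ t) with hS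
  by_cases hne : S.Nonempty
  · have hmax := S.max'_mem hne
    have hSeq : S = Finset.univ.filter (fun j => j ≤ S.max' hne) := by
      ext j
      simp only [hS, mem_filter, mem_univ, true_and]
      constructor
      · intro hj
        exact S.le_max' j (by simpa [hS] using hj)
      · intro hj
        have : ρ j ≤ ρ (S.max' hne) := hρ hj
        have hmx : ρ (S.max' hne) ≤ t := by simpa [hS] using hmax
        exact le_trans this hmx
    rw [hSeq]
    exact hA _
  · intro i j
    left
    have : S = ∅ := not_nonempty_iff_eq_empty.mp hne
    simp [bundle, this]
end

section
/- For two agents with additive nonpositive (chore) valuations and m chores arriving one per round, there exists an allocation of the chores such that for every t ∈ {1, …, m}, the cumulative allocation of the first t chores is EF1 for chores. In other words, a TEF1 allocation always exists for two agents in the chores setting. -/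
open Finset

/-- EF1 for chores of the allocation `A` restricted to the item set `S`. -/
def EF1chores {n m : ℕ} (v : Fin n → Fin m → ℝ) (A : Fin m → Fin n) (S : Finset (Fin m)) : Prop :=
  ∀ i j : Fin n, bundle A S i = ∅ ∨
    ∃ c ∈ bundle A S i, bval (v i) ((bundle A S i).erase c) ≥ bval (v i) (bundle A S j)

section Aux

variable {n m : ℕ}

lemma bundle_update_of_not_mem (A : Fin m → Fin n) (c : Fin m) (x : Fin n)
    (S : Finset (Fin m)) (hc : c ∉ S) (i : Fin n) :
    bundle (Function.update A c x) S i = bundle A S i := by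
  unfold bundle
  apply filter_congr
  intro j hj
  have hjc : j ≠ c := fun h => hc (h ▸ hj)
  simp [Function.update_of_ne hjc]

lemma ef1_update_of_not_mem (v : Fin n → Fin m → ℝ) (A : Fin m → Fin n) (c : Fin m)
    (x : Fin n) (S : Finset (Fin m)) (hc : c ∉ S) (h : EF1chores v A S) :
    EF1chores v (Function.update A c x) S := by
  intro i j
  rw [bundle_update_of_not_mem A c x S hc i, bundle_update_of_not_mem A c x S hc j]
  exact h i j

lemma bundle_update_insert_self (A : Fin m → Fin n) (c : Fin m) (x : Fin n)
    (S : Finset (Fin m)) (hc : c ∉ S) :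
    bundle (Function.update A c x) (insert c S) x = insert c (bundle A S x) := by
  unfold bundle
  rw [filter_insert]
  rw [if_pos (by simp)]
  congr 1
  have := bundle_update_of_not_mem A c x S hc x
  simpa [bundle] using this

lemma bundle_update_insert_other (A : Fin m → Fin n) (c : Fin m) (x : Fin n)
    (S : Finset (Fin m)) (hc : c ∉ S) (i : Fin n) (hxi : x ≠ i) :
    bundle (Function.update A c x) (insert c S) i = bundle A S i := by
  unfold bundle
  rw [filter_insert]
  rw [if_neg (by simp [hxi])]
  have := bundle_update_of_not_mem A c x S hc i
  simpa [bundle] using this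

lemma bundle_subset (A : Fin m → Fin n) (S : Finset (Fin m)) (i : Fin n) :
    bundle A S i ⊆ S := filter_subset _ _

lemma bval_insert (v : Fin m → ℝ) (c : Fin m) (B : Finset (Fin m)) (hc : c ∉ B) :
    bval v (insert c B) = v c + bval v B := by
  unfold bval
  exact Finset.sum_insert hc

lemma bval_erase (v : Fin m → ℝ) (c : Fin m) (B : Finset (Fin m)) (hc : c ∈ B) :
    bval v (B.erase c) = bval v B - v c := by
  unfold bval
  exact Finset.sum_erase_eq_sub hc

end Aux

/-- Giving the new chore `c` to agent `0` keeps EF1, provided agent `0` was envy-free. -/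
lemma step_ef1_zero {m : ℕ} (v : Fin 2 → Fin m → ℝ) (hv : ∀ i j, v i j ≤ 0)
    (A : Fin m → Fin 2) (S : Finset (Fin m)) (c : Fin m) (hc : c ∉ S)
    (hEF : EF1chores v A S)
    (hD : bval (v 0) (bundle A S 1) ≤ bval (v 0) (bundle A S 0)) :
    EF1chores v (Function.update A c 0) (insert c S) := by
  have hcB0 : c ∉ bundle A S 0 := fun h => hc (bundle_subset A S 0 h)
  have h0 : bundle (Function.update A c 0) (insert c S) 0 = insert c (bundle A S 0) :=
    bundle_update_insert_self A c 0 S hc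
  have h1 : bundle (Function.update A c 0) (insert c S) 1 = bundle A S 1 :=
    bundle_update_insert_other A c 0 S hc 1 (by decide)
  intro i j
  have h2 : ∀ k : Fin 2, k = 0 ∨ k = 1 := by decide
  rcases h2 i with rfl | rfl <;> rcases h2 j with rfl | rfl
  · -- (0,0)
    right
    refine ⟨c, ?_, ?_⟩
    · rw [h0]; exact mem_insert_self c _
    · rw [h0, Finset.erase_insert hcB0, bval_insert (v 0) c _ hcB0]
      have := hv 0 c
      linarith
  · -- (0,1)
    right
    refine ⟨c, ?_, ?_⟩
    · rw [h0]; exact mem_insert_self c _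
    · rw [h0, h1, Finset.erase_insert hcB0]
      exact hD
  · -- (1,0)
    rcases hEF 1 0 with h | ⟨x, hx, hxv⟩
    · left; rw [h1]; exact h
    · right
      refine ⟨x, ?_, ?_⟩
      · rw [h1]; exact hx
      · rw [h1, h0, bval_insert (v 1) c _ hcB0]
        have := hv 1 c
        linarith
  · -- (1,1)
    rcases hEF 1 1 with h | ⟨x, hx, _⟩
    · left; rw [h1]; exact h
    · right
      refine ⟨x, ?_, ?_⟩
      · rw [h1]; exact hx
      · rw [h1, bval_erase (v 1) x _ hx]
        have := hv 1 x
        linarith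

/-- Giving the new chore `c` to agent `1` keeps EF1, provided agent `1` was envy-free. -/
lemma step_ef1_one {m : ℕ} (v : Fin 2 → Fin m → ℝ) (hv : ∀ i j, v i j ≤ 0)
    (A : Fin m → Fin 2) (S : Finset (Fin m)) (c : Fin m) (hc : c ∉ S)
    (hEF : EF1chores v A S)
    (hD : bval (v 1) (bundle A S 0) ≤ bval (v 1) (bundle A S 1)) :
    EF1chores v (Function.update A c 1) (insert c S) := by
  have hcB1 : c ∉ bundle A S 1 := fun h => hc (bundle_subset A S 1 h)
  have h1 : bundle (Function.update A c 1) (insert c S) 1 = insert c (bundle A S 1) :=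
    bundle_update_insert_self A c 1 S hc
  have h0 : bundle (Function.update A c 1) (insert c S) 0 = bundle A S 0 :=
    bundle_update_insert_other A c 1 S hc 0 (by decide)
  intro i j
  have h2 : ∀ k : Fin 2, k = 0 ∨ k = 1 := by decide
  rcases h2 i with rfl | rfl <;> rcases h2 j with rfl | rfl
  · -- (0,0)
    rcases hEF 0 0 with h | ⟨x, hx, _⟩
    · left; rw [h0]; exact h
    · right
      refine ⟨x, ?_, ?_⟩
      · rw [h0]; exact hx
      · rw [h0, bval_erase (v 0) x _ hx]
        have := hv 0 x
        linarith
  · -- (0,1)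
    rcases hEF 0 1 with h | ⟨x, hx, hxv⟩
    · left; rw [h0]; exact h
    · right
      refine ⟨x, ?_, ?_⟩
      · rw [h0]; exact hx
      · rw [h0, h1, bval_insert (v 0) c _ hcB1]
        have := hv 0 c
        linarith
  · -- (1,0)
    right
    refine ⟨c, ?_, ?_⟩
    · rw [h1]; exact mem_insert_self c _
    · rw [h1, h0, Finset.erase_insert hcB1]
      exact hD
  · -- (1,1)
    right
    refine ⟨c, ?_, ?_⟩
    · rw [h1]; exact mem_insert_self c _
    · rw [h1, Finset.erase_insert hcB1, bval_insert (v 1) c _ hcB1]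
      have := hv 1 c
      linarith

/-- For two agents with nonpositive (chore) valuations and chores arriving one per
round, there is an allocation whose cumulative allocation after every round is EF1
for chores: a TEF1 allocation always exists. -/
theorem stmt1 (m : ℕ) (v : Fin 2 → Fin m → ℝ) (hv : ∀ i j, v i j ≤ 0) :
    ∃ A : Fin m → Fin 2, ∀ t : Fin m,
      EF1chores v A (Finset.univ.filter (fun j => j ≤ t)) := by
  classical
  set P : ℕ → Finset (Fin m) := fun t => Finset.univ.filter (fun j => (j : ℕ) < t) with hPdef
  have key : ∀ t, t ≤ m → ∃ X Y : Fin m → Fin 2,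
      (∀ s, s ≤ t → EF1chores v X (P s)) ∧ (∀ s, s ≤ t → EF1chores v Y (P s)) ∧
      bval (v 0) (bundle X (P t) 1) ≤ bval (v 0) (bundle X (P t) 0) ∧
      bval (v 1) (bundle Y (P t) 0) ≤ bval (v 1) (bundle Y (P t) 1) ∧
      bval (v 0) (bundle X (P t) 1) - bval (v 0) (bundle X (P t) 0) ≤
        bval (v 0) (bundle Y (P t) 0) - bval (v 0) (bundle Y (P t) 1) ∧
      bval (v 1) (bundle Y (P t) 0) - bval (v 1) (bundle Y (P t) 1) ≤
        bval (v 1) (bundle X (P t) 1) - bval (v 1) (bundle X (P t) 0) := by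
    intro t
    induction t with
    | zero =>
      intro _
      refine ⟨fun _ => 0, fun _ => 0, ?_, ?_, ?_, ?_, ?_, ?_⟩
      all_goals {
        first
        | (intro s hs
           interval_cases s
           intro i j
           left
           simp [bundle, hPdef])
        | simp [bundle, bval, hPdef]
      }
    | succ t ih =>
      intro ht
      have htm : t < m := lt_of_lt_of_le (Nat.lt_succ_self t) ht
      obtain ⟨X, Y, hX, hY, ha, hb, hy1, hc2⟩ := ih (le_of_lt htm)
      set ct : Fin m := ⟨t, htm⟩ with hct
      have hctP : ct ∉ P t := by
        simp only [hPdef, mem_filter, mem_univ, true_and, not_lt, hct]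
        exact le_rfl
      have hP1 : P (t + 1) = insert ct (P t) := by
        ext j
        simp only [hPdef, mem_filter, mem_univ, true_and, mem_insert]
        constructor
        · intro hj
          rcases Nat.lt_succ_iff_lt_or_eq.mp hj with h | h
          · exact Or.inr h
          · exact Or.inl (by ext; simp [hct, h])
        · rintro (h | h)
          · rw [h]; simp [hct]
          · exact Nat.lt_succ_of_lt h
      -- abbreviations
      have hcB0X : ct ∉ bundle X (P t) 0 := fun h => hctP (bundle_subset X (P t) 0 h)
      have hcB1Y : ct ∉ bundle Y (P t) 1 := fun h => hctP (bundle_subset Y (P t) 1 h)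
      set X1 : Fin m → Fin 2 := Function.update X ct 0 with hX1def
      set Y2 : Fin m → Fin 2 := Function.update Y ct 1 with hY2def
      -- EF1 for all prefixes
      have hX1ef : ∀ s, s ≤ t + 1 → EF1chores v X1 (P s) := by
        intro s hs
        rcases Nat.lt_succ_iff_lt_or_eq.mp (Nat.lt_succ_of_le hs) with hlt | heq
        · have hsle : s ≤ t := Nat.lt_succ_iff.mp hlt
          have hcs : ct ∉ P s := by
            simp only [hPdef, mem_filter, mem_univ, true_and, not_lt, hct]
            exact hsle
          exact ef1_update_of_not_mem v X ct 0 (P s) hcs (hX s hsle)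
        · rw [heq, hP1]
          exact step_ef1_zero v hv X (P t) ct hctP (hX t le_rfl) ha
      have hY2ef : ∀ s, s ≤ t + 1 → EF1chores v Y2 (P s) := by
        intro s hs
        rcases Nat.lt_succ_iff_lt_or_eq.mp (Nat.lt_succ_of_le hs) with hlt | heq
        · have hsle : s ≤ t := Nat.lt_succ_iff.mp hlt
          have hcs : ct ∉ P s := by
            simp only [hPdef, mem_filter, mem_univ, true_and, not_lt, hct]
            exact hsle
          exact ef1_update_of_not_mem v Y ct 1 (P s) hcs (hY s hsle)
        · rw [heq, hP1]
          exact step_ef1_one v hv Y (P t) ct hctP (hY t le_rfl) hb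
      -- bundle identities at time t+1
      have hX1b0 : bundle X1 (P (t + 1)) 0 = insert ct (bundle X (P t) 0) := by
        rw [hP1]; exact bundle_update_insert_self X ct 0 (P t) hctP
      have hX1b1 : bundle X1 (P (t + 1)) 1 = bundle X (P t) 1 := by
        rw [hP1]; exact bundle_update_insert_other X ct 0 (P t) hctP 1 (by decide)
      have hY2b1 : bundle Y2 (P (t + 1)) 1 = insert ct (bundle Y (P t) 1) := by
        rw [hP1]; exact bundle_update_insert_self Y ct 1 (P t) hctP
      have hY2b0 : bundle Y2 (P (t + 1)) 0 = bundle Y (P t) 0 := by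
        rw [hP1]; exact bundle_update_insert_other Y ct 1 (P t) hctP 0 (by decide)
      -- bval identities
      have eX0 : bval (v 0) (bundle X1 (P (t+1)) 0) = v 0 ct + bval (v 0) (bundle X (P t) 0) := by
        rw [hX1b0, bval_insert (v 0) ct _ hcB0X]
      have eX0' : bval (v 1) (bundle X1 (P (t+1)) 0) = v 1 ct + bval (v 1) (bundle X (P t) 0) := by
        rw [hX1b0, bval_insert (v 1) ct _ hcB0X]
      have eX1 : bval (v 0) (bundle X1 (P (t+1)) 1) = bval (v 0) (bundle X (P t) 1) := by
        rw [hX1b1]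
      have eX1' : bval (v 1) (bundle X1 (P (t+1)) 1) = bval (v 1) (bundle X (P t) 1) := by
        rw [hX1b1]
      have eY1 : bval (v 1) (bundle Y2 (P (t+1)) 1) = v 1 ct + bval (v 1) (bundle Y (P t) 1) := by
        rw [hY2b1, bval_insert (v 1) ct _ hcB1Y]
      have eY1' : bval (v 0) (bundle Y2 (P (t+1)) 1) = v 0 ct + bval (v 0) (bundle Y (P t) 1) := by
        rw [hY2b1, bval_insert (v 0) ct _ hcB1Y]
      have eY0 : bval (v 0) (bundle Y2 (P (t+1)) 0) = bval (v 0) (bundle Y (P t) 0) := by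
        rw [hY2b0]
      have eY0' : bval (v 1) (bundle Y2 (P (t+1)) 0) = bval (v 1) (bundle Y (P t) 0) := by
        rw [hY2b0]
      -- case analysis
      by_cases hA : 0 ≤ bval (v 0) (bundle X (P t) 0) + v 0 ct
                      - bval (v 0) (bundle X (P t) 1)
      · by_cases hB : 0 ≤ bval (v 1) (bundle Y (P t) 1) + v 1 ct
                        - bval (v 1) (bundle Y (P t) 0)
        · exact ⟨X1, Y2, hX1ef, hY2ef, by rw [eX0, eX1]; linarith,
            by rw [eY1, eY0']; linarith,
            by rw [eX0, eX1, eY0, eY1']; linarith,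
            by rw [eY0', eY1, eX1', eX0']; linarith⟩
        · push_neg at hB
          exact ⟨X1, X1, hX1ef, hX1ef, by rw [eX0, eX1]; linarith,
            by rw [eX0', eX1']; linarith,
            by rw [eX0, eX1]; linarith,
            by rw [eX0', eX1']; linarith⟩
      · push_neg at hA
        by_cases hB : 0 ≤ bval (v 1) (bundle Y (P t) 1) + v 1 ct
                        - bval (v 1) (bundle Y (P t) 0)
        · exact ⟨Y2, Y2, hY2ef, hY2ef, by rw [eY0, eY1']; linarith,
            by rw [eY1, eY0']; linarith,
            by rw [eY0, eY1']; linarith,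
            by rw [eY1, eY0']; linarith⟩
        · push_neg at hB
          exact ⟨Y2, X1, hY2ef, hX1ef, by rw [eY0, eY1']; linarith,
            by rw [eX0', eX1']; linarith,
            by rw [eX0, eX1, eY0, eY1']; linarith,
            by rw [eX0', eX1', eY1, eY0']; linarith⟩
  obtain ⟨X, _, hX, _⟩ := key m le_rfl
  refine ⟨X, fun t => ?_⟩
  have hset : Finset.univ.filter (fun j => j ≤ t) = P ((t : ℕ) + 1) := by
    ext j
    simp only [hPdef, mem_filter, mem_univ, true_and, Fin.le_def, Nat.lt_succ_iff]
  rw [hset]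
  exact hX ((t : ℕ) + 1) t.isLt
end

section
/- Suppose there are n agents and items o_1, …, o_m arriving one per round, partitioned into two types T_1 and T_2, where each agent values all items of the same type equally. Allocate items of type T_1 in round-robin order over agents 1, 2, …, n (cycling), and items of type T_2 in reverse round-robin order n, n−1, …, 1 (cycling), each type tracked by its own independent counter. Then the resulting allocation is TEF1 for goods when all values are nonnegative, and TEF1 for chores when all values are nonpositive. -/
/-!
After `t` rounds, with `T` items of the first type and `F` of the second so far, the round-robin
counter gives agent `k` exactly as many first-type items as there are `r < T` with
`r ≡ k [MOD n]`, and the reversed counter as many second-type items as there are `r < F` with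
`r ≡ n - 1 - k [MOD n]`. Such counts are antitone in the residue and drop by at most one over
the residues below `n`. So for `i ≤ j`, agent `j` holds no more first-type items than `i` and at
most one more second-type item, and symmetrically for `j ≤ i`: removing a single item from the
bundle of `j` leaves at most as many items of each type as `i` holds. Since each agent values
all items of a type equally, this gives EF1 for goods and, with the roles exchanged, for chores.
-/

open Finset

/-- Number of earlier items of the same type as item `j`. -/
def sameTypeCount {m : ℕ} (type : Fin m → Bool) (j : Fin m) : ℕ :=
  (Finset.univ.filter (fun k => k < j ∧ type k = type j)).card

/-- The two-type algorithm: items of type `true` are allocated round-robin over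
agents `1, 2, …, n` (i.e. `0, 1, …, n−1`), and items of type `false` in reverse
round-robin over agents `n, n−1, …, 1`, each type with its own counter. -/
def twoTypeAlloc {m : ℕ} (n : ℕ) (hn : 0 < n) (type : Fin m → Bool) (j : Fin m) : Fin n :=
  if type j then ⟨sameTypeCount type j % n, Nat.mod_lt _ hn⟩
  else ⟨n - 1 - sameTypeCount type j % n, by omega⟩

namespace Finset

variable {α β M : Type*}

theorem sum_le_sum_of_card_filter_le [DecidableEq β] [Fintype β] [AddCommMonoid M]
    [PartialOrder M] [IsOrderedAddMonoid M] {f : α → β} {w : α → M}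
    (hw : ∀ x y, f x = f y → w x = w y) (hw0 : ∀ x, 0 ≤ w x) {s t : Finset α}
    (h : ∀ b, #{x ∈ s | f x = b} ≤ #{x ∈ t | f x = b}) :
    ∑ x ∈ s, w x ≤ ∑ x ∈ t, w x := by
  rw [← sum_fiberwise s f w, ← sum_fiberwise t f w]
  refine sum_le_sum fun b _ => ?_
  rcases {x ∈ s | f x = b}.eq_empty_or_nonempty with hs | ⟨x₀, hx₀⟩
  · rw [hs, sum_empty]
    exact sum_nonneg fun x _ => hw0 x
  · have hfiber : ∀ u : Finset α, ∀ y ∈ {x ∈ u | f x = b}, w y = w x₀ := fun u y hy =>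
      hw y x₀ ((mem_filter.1 hy).2.trans (mem_filter.1 hx₀).2.symm)
    rw [sum_eq_card_nsmul (hfiber s), sum_eq_card_nsmul (hfiber t)]
    exact nsmul_le_nsmul_left (hw0 x₀) (h b)

theorem sum_le_sum_of_card_filter_le_of_nonpos [DecidableEq β] [Fintype β] [AddCommMonoid M]
    [PartialOrder M] [IsOrderedAddMonoid M] {f : α → β} {w : α → M}
    (hw : ∀ x y, f x = f y → w x = w y) (hw0 : ∀ x, w x ≤ 0) {s t : Finset α}
    (h : ∀ b, #{x ∈ s | f x = b} ≤ #{x ∈ t | f x = b}) :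
    ∑ x ∈ t, w x ≤ ∑ x ∈ s, w x :=
  sum_le_sum_of_card_filter_le (M := Mᵒᵈ) hw hw0 h

theorem exists_mem_forall_card_filter_erase_le [DecidableEq α] [DecidableEq β] (f : α → β)
    {s t : Finset α} (ht : t.Nonempty) (b₀ : β)
    (hb₀ : #{x ∈ t | f x = b₀} ≤ #{x ∈ s | f x = b₀} + 1)
    (hb : ∀ b ≠ b₀, #{x ∈ t | f x = b} ≤ #{x ∈ s | f x = b}) :
    ∃ g ∈ t, ∀ b, #{x ∈ t.erase g | f x = b} ≤ #{x ∈ s | f x = b} := by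
  have herase : ∀ g b, #{x ∈ t.erase g | f x = b} ≤ #{x ∈ t | f x = b} := fun g b => by
    rw [filter_erase]
    exact card_erase_le
  by_cases hle : #{x ∈ t | f x = b₀} ≤ #{x ∈ s | f x = b₀}
  · obtain ⟨g, hg⟩ := ht
    refine ⟨g, hg, fun b => (herase g b).trans ?_⟩
    by_cases hbb : b = b₀
    · exact hbb ▸ hle
    · exact hb b hbb
  · obtain ⟨g, hg⟩ : {x ∈ t | f x = b₀}.Nonempty := card_pos.1 (by omega)
    refine ⟨g, (mem_filter.1 hg).1, fun b => ?_⟩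
    by_cases hbb : b = b₀
    · subst hbb
      rw [filter_erase, card_erase_of_mem hg]
      omega
    · exact (herase g b).trans (hb b hbb)

theorem card_filter_card_filter_lt [LinearOrder α] (s : Finset α) (P : ℕ → Prop)
    [DecidablePred P] :
    #{x ∈ s | P #{y ∈ s | y < x}} = Nat.count P #s := by
  set rank : α → ℕ := fun x => #{y ∈ s | y < x}
  have hmono : StrictMonoOn rank s := fun x hx y _ hxy =>
    card_lt_card <| (ssubset_iff_of_subset fun z hz => by
      simp only [mem_filter] at hz ⊢
      exact ⟨hz.1, hz.2.trans hxy⟩).2 ⟨x, by simp [mem_coe.1 hx, hxy]⟩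
  have hrange : s.image rank = range #s := by
    refine eq_of_subset_of_card_le (fun r hr => ?_) ?_
    · obtain ⟨x, hx, rfl⟩ := mem_image.1 hr
      exact mem_range.2 <| card_lt_card <| (ssubset_iff_of_subset (filter_subset _ s)).2
        ⟨x, hx, by simp⟩
    · rw [card_range, card_image_of_injOn hmono.injOn]
  rw [Nat.count_eq_card_filter_range, ← hrange, filter_image,
    card_image_of_injOn (hmono.injOn.mono (filter_subset _ s))]

end Finset

namespace Nat

variable {n p q : ℕ}

theorem count_modEq_le_count_modEq_of_le (hpq : p ≤ q) (hq : q < n) (N : ℕ) :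
    count (· ≡ q [MOD n]) N ≤ count (· ≡ p [MOD n]) N := by
  rw [count_modEq_card _ (by omega), count_modEq_card _ (by omega),
    mod_eq_of_lt hq, mod_eq_of_lt (hpq.trans_lt hq)]
  split_ifs <;> omega

theorem count_modEq_le_count_modEq_add_one (hpq : p ≤ q) (hq : q < n) (N : ℕ) :
    count (· ≡ p [MOD n]) N ≤ count (· ≡ q [MOD n]) N + 1 := by
  rw [count_modEq_card _ (by omega), count_modEq_card _ (by omega),
    mod_eq_of_lt hq, mod_eq_of_lt (hpq.trans_lt hq)]
  split_ifs <;> omega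

end Nat

section TwoTypeAlloc

open Nat

variable {m n : ℕ} (hn : 0 < n) (type : Fin m → Bool)

theorem twoTypeAlloc_eq_iff (x : Fin m) (k : Fin n) :
    twoTypeAlloc n hn type x = k ↔
      sameTypeCount type x ≡ (if type x then k else n - 1 - k : ℕ) [MOD n] := by
  have hk := k.isLt
  have hx := Nat.mod_lt (sameTypeCount type x) hn
  unfold twoTypeAlloc
  split_ifs
  · rw [Fin.ext_iff, Nat.ModEq, Nat.mod_eq_of_lt hk]
  · rw [Fin.ext_iff, Fin.val_mk, Nat.ModEq, Nat.mod_eq_of_lt (by omega : n - 1 - k < n)]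
    omega

theorem sameTypeCount_eq_card_filter_lt {t x : Fin m} (hxt : x ≤ t) :
    sameTypeCount type x = #{y ∈ {y | y ≤ t ∧ type y = type x} | y < x} := by
  unfold sameTypeCount
  congr 1
  ext y
  simp only [mem_filter, mem_univ, true_and]
  exact ⟨fun ⟨hyx, hy⟩ => ⟨⟨hyx.le.trans hxt, hy⟩, hyx⟩, fun ⟨⟨_, hy⟩, hyx⟩ => ⟨hyx, hy⟩⟩

theorem card_bundle_twoTypeAlloc_filter_type (t : Fin m) (k : Fin n) (b : Bool) :
    #{x ∈ bundle (twoTypeAlloc n hn type) {x | x ≤ t} k | type x = b} =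
      count (· ≡ (if b then k else n - 1 - k : ℕ) [MOD n]) #{x | x ≤ t ∧ type x = b} := by
  rw [← card_filter_card_filter_lt]
  congr 1
  ext x
  simp only [bundle, mem_filter, mem_univ, true_and]
  constructor
  · rintro ⟨⟨hxt, hk⟩, rfl⟩
    exact ⟨⟨hxt, rfl⟩, sameTypeCount_eq_card_filter_lt type hxt ▸
      (twoTypeAlloc_eq_iff hn type x k).1 hk⟩
  · rintro ⟨⟨hxt, rfl⟩, hk⟩
    exact ⟨⟨hxt, (twoTypeAlloc_eq_iff hn type x k).2
      (sameTypeCount_eq_card_filter_lt type hxt ▸ hk)⟩, rfl⟩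

theorem exists_mem_bundle_twoTypeAlloc_forall_card_filter_erase_le (t : Fin m) (i j : Fin n)
    (hj : (bundle (twoTypeAlloc n hn type) {x | x ≤ t} j).Nonempty) :
    ∃ g ∈ bundle (twoTypeAlloc n hn type) {x | x ≤ t} j, ∀ b,
      #{x ∈ (bundle (twoTypeAlloc n hn type) {x | x ≤ t} j).erase g | type x = b} ≤
        #{x ∈ bundle (twoTypeAlloc n hn type) {x | x ≤ t} i | type x = b} := by
  have hi := i.isLt
  have hj' := j.isLt
  rcases le_total (i : ℕ) j with hij | hji
  · refine exists_mem_forall_card_filter_erase_le type hj false ?_ fun b hb => ?_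
    · simp only [card_bundle_twoTypeAlloc_filter_type, Bool.false_eq_true, ↓reduceIte]
      exact count_modEq_le_count_modEq_add_one (by omega) (by omega) _
    · simp only [ne_eq, Bool.not_eq_false] at hb
      subst hb
      simp only [card_bundle_twoTypeAlloc_filter_type, ↓reduceIte]
      exact count_modEq_le_count_modEq_of_le hij hj' _
  · refine exists_mem_forall_card_filter_erase_le type hj true ?_ fun b hb => ?_
    · simp only [card_bundle_twoTypeAlloc_filter_type, ↓reduceIte]
      exact count_modEq_le_count_modEq_add_one hji hi _
    · simp only [ne_eq, Bool.not_eq_true] at hb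
      subst hb
      simp only [card_bundle_twoTypeAlloc_filter_type, Bool.false_eq_true, ↓reduceIte]
      exact count_modEq_le_count_modEq_of_le (by omega) (by omega) _

end TwoTypeAlloc

/-- With two types of items (each agent values all items of one type equally),
the two-counter round-robin algorithm yields a TEF1 allocation: for goods
(nonnegative values) and for chores (nonpositive values). -/
theorem stmt4 (n m : ℕ) (hn : 0 < n) (v : Fin n → Fin m → ℝ) (type : Fin m → Bool)
    (htype : ∀ i : Fin n, ∀ j k : Fin m, type j = type k → v i j = v i k) :
    ((∀ i j, 0 ≤ v i j) → ∀ t : Fin m,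
        EF1goods v (twoTypeAlloc n hn type) (Finset.univ.filter (fun j => j ≤ t))) ∧
    ((∀ i j, v i j ≤ 0) → ∀ t : Fin m,
        EF1chores v (twoTypeAlloc n hn type) (Finset.univ.filter (fun j => j ≤ t))) := by
  constructor
  · intro hpos t i j
    refine (bundle _ _ j).eq_empty_or_nonempty.imp id fun hj => ?_
    obtain ⟨g, hg, hcount⟩ :=
      exists_mem_bundle_twoTypeAlloc_forall_card_filter_erase_le hn type t i j hj
    exact ⟨g, hg, sum_le_sum_of_card_filter_le (htype i) (hpos i) hcount⟩
  · intro hneg t i j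
    refine (bundle _ _ i).eq_empty_or_nonempty.imp id fun hi => ?_
    obtain ⟨c, hc, hcount⟩ :=
      exists_mem_bundle_twoTypeAlloc_forall_card_filter_erase_le hn type t j i hi
    exact ⟨c, hc, sum_le_sum_of_card_filter_le_of_nonpos (htype i) (hneg i) hcount⟩
end

section
/- Suppose agents have generalized binary valuations over goods g_1, …, g_m arriving one per round: for every agent i and good g_j, v_i(g_j) ∈ {0, p_j} for some fixed p_j > 0. Consider the greedy algorithm that, at each round, allocates the arriving good to an agent with positive value for it who has minimum current bundle value (or to any agent if no one values it). Then the resulting allocation is TEF1. -/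
open Finset

/-- The value of agent `i`'s bundle of goods that arrived strictly before round `t`. -/
def prevVal {n m : ℕ} (v : Fin n → Fin m → ℝ) (A : Fin m → Fin n) (i : Fin n) (t : Fin m) : ℝ :=
  bval (v i) (bundle A (Finset.univ.filter (fun j => j < t)) i)

/-- Generalized binary valuations over goods: the greedy algorithm that gives each
arriving good to a positive-valuing agent of minimum current bundle value (or to
anyone if nobody values it) produces a TEF1 allocation. -/
theorem stmt5 (n m : ℕ) (v : Fin n → Fin m → ℝ) (p : Fin m → ℝ)
    (hp : ∀ j, 0 < p j) (hbin : ∀ i j, v i j = 0 ∨ v i j = p j)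
    (A : Fin m → Fin n)
    (hgreedy : ∀ t : Fin m,
      (∀ i, v i t = 0) ∨
      (0 < v (A t) t ∧ ∀ i, 0 < v i t → prevVal v A (A t) t ≤ prevVal v A i t)) :
    ∀ t : Fin m, EF1goods v A (Finset.univ.filter (fun j => j ≤ t)) := by
  have hnn : ∀ a g, 0 ≤ v a g := by
    intro a g
    rcases hbin a g with h | h
    · rw [h]
    · rw [h]; exact (hp g).le
  have hkey : ∀ (a : Fin n) (g : Fin m), v a g ≤ v (A g) g := by
    intro a g
    rcases hgreedy g with h | h
    · rw [h a, h (A g)]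
    · rcases hbin a g with h' | h'
      · rw [h']; exact hnn _ _
      · rw [h']
        rcases hbin (A g) g with h2 | h2
        · exact absurd h.1 (by rw [h2]; exact lt_irrefl 0)
        · rw [h2]
  intro t i j
  set S := Finset.univ.filter (fun j' : Fin m => j' ≤ t) with hS
  by_cases hemp : bundle A S j = ∅
  · exact Or.inl hemp
  right
  set Bj := bundle A S j with hBj
  set T := Bj.filter (fun g => 0 < v i g) with hT
  by_cases hTe : T = ∅
  · obtain ⟨g, hg⟩ := Finset.nonempty_iff_ne_empty.mpr hemp
    refine ⟨g, hg, ?_⟩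
    have hz : ∀ h ∈ Bj.erase g, v i h = 0 := by
      intro h hh
      have hh' := Finset.mem_of_mem_erase hh
      by_contra hne
      have h1 : 0 < v i h := lt_of_le_of_ne (hnn i h) (Ne.symm hne)
      have : h ∈ T := Finset.mem_filter.mpr ⟨hh', h1⟩
      rw [hTe] at this
      exact absurd this (Finset.notMem_empty h)
    have hz' : bval (v i) (Bj.erase g) = 0 := Finset.sum_eq_zero hz
    rw [ge_iff_le, hz']
    exact Finset.sum_nonneg (fun _ _ => hnn i _)
  · have hTne : T.Nonempty := Finset.nonempty_iff_ne_empty.mpr hTe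
    set g := T.max' hTne with hgdef
    have hgT : g ∈ T := T.max'_mem hTne
    have hgBj : g ∈ Bj := (Finset.mem_filter.mp hgT).1
    have hgpos : 0 < v i g := (Finset.mem_filter.mp hgT).2
    have hAg : A g = j := (Finset.mem_filter.mp hgBj).2
    have hgt : g ≤ t := by
      have := (Finset.mem_filter.mp hgBj).1
      rw [hS] at this
      exact (Finset.mem_filter.mp this).2
    refine ⟨g, hgBj, ?_⟩
    -- step 1: erase sum equals sum over goods < g in Bj
    set P := (Bj.erase g).filter (fun h => h < g) with hP
    have hsub : P ⊆ Bj.erase g := Finset.filter_subset _ _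
    have hz : ∀ x ∈ Bj.erase g, x ∉ P → v i x = 0 := by
      intro x hx hxP
      have hxBj := Finset.mem_of_mem_erase hx
      have hxne : x ≠ g := Finset.ne_of_mem_erase hx
      have hxnlt : ¬ x < g := by
        intro hlt
        exact hxP (Finset.mem_filter.mpr ⟨hx, hlt⟩)
      by_contra hne
      have h1 : 0 < v i x := lt_of_le_of_ne (hnn i x) (Ne.symm hne)
      have hxT : x ∈ T := Finset.mem_filter.mpr ⟨hxBj, h1⟩
      have := T.le_max' x hxT
      rw [← hgdef] at this
      exact hxne (le_antisymm this (not_lt.mp hxnlt))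
    have hstep1 : bval (v i) (Bj.erase g) = ∑ h ∈ P, v i h :=
      (Finset.sum_subset hsub hz).symm
    -- step 2: P = bundle A (filter (< g)) j
    have hPeq : P = bundle A (Finset.univ.filter (fun h => h < g)) j := by
      ext x
      simp only [hP, hBj, bundle, hS, Finset.mem_filter, Finset.mem_erase,
        Finset.mem_univ, true_and]
      constructor
      · rintro ⟨⟨hne, hle, hAx⟩, hlt⟩
        exact ⟨hlt, hAx⟩
      · rintro ⟨hlt, hAx⟩
        exact ⟨⟨ne_of_lt hlt, le_of_lt (lt_of_lt_of_le hlt hgt), hAx⟩, hlt⟩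
    -- step 3: i's value of P ≤ j's value of P
    have hstep3 : ∑ h ∈ P, v i h ≤ ∑ h ∈ P, v j h := by
      apply Finset.sum_le_sum
      intro x hx
      have hAx : A x = j := by
        rw [hPeq] at hx
        exact (Finset.mem_filter.mp hx).2
      calc v i x ≤ v (A x) x := hkey i x
        _ = v j x := by rw [hAx]
    have hstep3' : ∑ h ∈ P, v j h = prevVal v A j g := by
      rw [prevVal, bval, hPeq]
    -- step 4: greedy at round g
    have hglt : prevVal v A j g ≤ prevVal v A i g := by
      rcases hgreedy g with h | h
      · exact absurd (h i) (ne_of_gt hgpos)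
      · have := h.2 i hgpos
        rwa [hAg] at this
    -- step 5: prevVal i g ≤ bval (v i) (bundle A S i)
    have hstep5 : prevVal v A i g ≤ bval (v i) (bundle A S i) := by
      rw [prevVal, bval, bval]
      apply Finset.sum_le_sum_of_subset_of_nonneg
      · intro x hx
        simp only [bundle, hS, Finset.mem_filter, Finset.mem_univ, true_and] at hx ⊢
        exact ⟨le_of_lt (lt_of_lt_of_le hx.1 hgt), hx.2⟩
      · intro x _ _
        exact hnn i x
    rw [ge_iff_le, hstep1]
    calc ∑ h ∈ P, v i h ≤ ∑ h ∈ P, v j h := hstep3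
      _ = prevVal v A j g := hstep3'
      _ ≤ prevVal v A i g := hglt
      _ ≤ _ := hstep5
end

section
/- Suppose agents have generalized binary valuations over chores c_1, …, c_m arriving one per round: for every agent i and chore c_j, v_i(c_j) ∈ {0, p_j} for some fixed p_j < 0. Consider the greedy algorithm that, at each round, allocates the arriving chore to some agent who values it at 0 if such an agent exists, and otherwise to an agent with maximum current bundle value. Then the resulting allocation is TEF1 for chores. -/
open Finset

/-- Generalized binary valuations over chores: the greedy algorithm that gives each
arriving chore to an agent valuing it at `0` if one exists, and otherwise to an
agent of maximum current bundle value, produces a TEF1 allocation for chores. -/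
theorem stmt6 (n m : ℕ) (v : Fin n → Fin m → ℝ) (p : Fin m → ℝ)
    (hp : ∀ j, p j < 0) (hbin : ∀ i j, v i j = 0 ∨ v i j = p j)
    (A : Fin m → Fin n)
    (hgreedy : ∀ t : Fin m,
      v (A t) t = 0 ∨
      ((¬ ∃ i, v i t = 0) ∧ ∀ i, prevVal v A i t ≤ prevVal v A (A t) t)) :
    ∀ t : Fin m, EF1chores v A (Finset.univ.filter (fun j => j ≤ t)) := by
  have hnonpos : ∀ (k : Fin n) (c : Fin m), v k c ≤ 0 := by
    intro k c
    rcases hbin k c with h | h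
    · simp [h]
    · rw [h]; exact (hp c).le
  have hkey : ∀ (k : Fin n) (c : Fin m), A c = k → ∀ l, v l c ≤ v k c := by
    intro k c hA l
    rcases hgreedy c with h0 | ⟨hno, _⟩
    · rw [hA] at h0; rw [h0]; exact hnonpos l c
    · have h1 : v k c = p c := (hbin k c).resolve_left (fun h => hno ⟨k, h⟩)
      have h2 : v l c = p c := (hbin l c).resolve_left (fun h => hno ⟨l, h⟩)
      rw [h1, h2]
  have hsum : ∀ (T : Finset (Fin m)) (k l : Fin n),
      bval (v l) (bundle A T k) ≤ bval (v k) (bundle A T k) := by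
    intro T k l
    apply Finset.sum_le_sum
    intro x hx
    exact hkey k x (Finset.mem_filter.1 hx).2 l
  intro t i j
  by_cases hB : bundle A (Finset.univ.filter (fun j => j ≤ t)) i = ∅
  · exact Or.inl hB
  right
  set S := Finset.univ.filter (fun j => j ≤ t) with hSdef
  by_cases hN : (bundle A S i).filter (fun c => v i c ≠ 0) = ∅
  · obtain ⟨c, hc⟩ := Finset.nonempty_iff_ne_empty.2 hB
    refine ⟨c, hc, ?_⟩
    have h1 : bval (v i) ((bundle A S i).erase c) = 0 := by
      apply Finset.sum_eq_zero
      intro x hx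
      by_contra h
      exact (Finset.eq_empty_iff_forall_notMem.1 hN x)
        (Finset.mem_filter.2 ⟨Finset.mem_of_mem_erase hx, h⟩)
    have h2 : bval (v i) (bundle A S j) ≤ 0 :=
      Finset.sum_nonpos (fun x _ => hnonpos i x)
    rw [h1]; exact h2
  · have hN' : ((bundle A S i).filter (fun c => v i c ≠ 0)).Nonempty :=
      Finset.nonempty_iff_ne_empty.2 hN
    set c := ((bundle A S i).filter (fun c => v i c ≠ 0)).max' hN' with hcdef
    have hcmem : c ∈ (bundle A S i).filter (fun c => v i c ≠ 0) :=
      Finset.max'_mem _ hN'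
    have hcBi : c ∈ bundle A S i := (Finset.mem_filter.1 hcmem).1
    have hcne : v i c ≠ 0 := (Finset.mem_filter.1 hcmem).2
    have hAc : A c = i := (Finset.mem_filter.1 hcBi).2
    have hct : c ≤ t := (Finset.mem_filter.1 (Finset.mem_filter.1 hcBi).1).2
    have hmax : ∀ l, prevVal v A l c ≤ prevVal v A i c := by
      rcases hgreedy c with h0 | ⟨_, hm⟩
      · rw [hAc] at h0; exact absurd h0 hcne
      · rw [hAc] at hm; exact hm
    refine ⟨c, hcBi, ?_⟩
    -- previous bundles
    have hPiSub : bundle A (Finset.univ.filter (fun j => j < c)) i ⊆ (bundle A S i).erase c := by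
      intro x hx
      obtain ⟨hxlt, hxA⟩ := Finset.mem_filter.1 hx
      have hxlt' : x < c := (Finset.mem_filter.1 hxlt).2
      refine Finset.mem_erase.2 ⟨ne_of_lt hxlt', ?_⟩
      exact Finset.mem_filter.2 ⟨Finset.mem_filter.2 ⟨Finset.mem_univ x, le_trans hxlt'.le hct⟩, hxA⟩
    have hErase : bval (v i) ((bundle A S i).erase c)
        = prevVal v A i c := by
      unfold prevVal bval
      symm
      apply Finset.sum_subset hPiSub
      intro x hx hnx
      obtain ⟨hxne, hxBi⟩ := Finset.mem_erase.1 hx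
      have hxA : A x = i := (Finset.mem_filter.1 hxBi).2
      by_contra h
      have hxN : x ∈ (bundle A S i).filter (fun c => v i c ≠ 0) :=
        Finset.mem_filter.2 ⟨hxBi, h⟩
      have hxle : x ≤ c := Finset.le_max' _ x hxN
      have hxlt : x < c := lt_of_le_of_ne hxle hxne
      exact hnx (Finset.mem_filter.2 ⟨Finset.mem_filter.2 ⟨Finset.mem_univ x, hxlt⟩, hxA⟩)
    have hPjSub : bundle A (Finset.univ.filter (fun j => j < c)) j ⊆ bundle A S j := by
      intro x hx
      obtain ⟨hxlt, hxA⟩ := Finset.mem_filter.1 hx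
      have hxlt' : x < c := (Finset.mem_filter.1 hxlt).2
      exact Finset.mem_filter.2 ⟨Finset.mem_filter.2 ⟨Finset.mem_univ x, le_trans hxlt'.le hct⟩, hxA⟩
    have hBj : bval (v i) (bundle A S j)
        ≤ bval (v i) (bundle A (Finset.univ.filter (fun j => j < c)) j) := by
      unfold bval
      rw [← Finset.sum_sdiff hPjSub]
      have : ∑ x ∈ bundle A S j \ bundle A (Finset.univ.filter (fun j => j < c)) j, v i x ≤ 0 :=
        Finset.sum_nonpos (fun x _ => hnonpos i x)
      linarith
    have hPj : bval (v i) (bundle A (Finset.univ.filter (fun j => j < c)) j)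
        ≤ prevVal v A j c := hsum _ j i
    calc bval (v i) (bundle A S j)
        ≤ prevVal v A j c := le_trans hBj hPj
      _ ≤ prevVal v A i c := hmax j
      _ = bval (v i) ((bundle A S i).erase c) := hErase.symm
end

section
/- Suppose n agents have additive nonnegative single-peaked valuations over goods g_1, …, g_m arriving one per round, with m = αn for some positive integer α (padding with zero-valued goods otherwise). Allocate goods cyclically so that agent i receives goods g_i, g_{i+n}, …, g_{i+(α−1)n}. Then the resulting allocation is TEF1: after every round t, the cumulative allocation is EF1 for goods. -/
open Finset

/-- Single-peaked profile: each agent's values are nondecreasing up to her peak item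
and nonincreasing afterwards. -/
def SinglePeaked {n m : ℕ} (v : Fin n → Fin m → ℝ) : Prop :=
  ∀ i : Fin n, ∃ p : Fin m,
    (∀ j k : Fin m, j ≤ k → k ≤ p → v i j ≤ v i k) ∧
    (∀ j k : Fin m, p ≤ j → j ≤ k → v i k ≤ v i j)

/-- Cyclic allocation: item `j` goes to agent `j mod n`. -/
def cyclicAlloc {m : ℕ} (n : ℕ) (hn : 0 < n) (j : Fin m) : Fin n :=
  ⟨j.val % n, Nat.mod_lt _ hn⟩

lemma mem_bundle_cyclic {n m : ℕ} (hn : 0 < n) (t : Fin m) (i : Fin n) (b : Fin m) :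
    b ∈ bundle (cyclicAlloc n hn) (Finset.univ.filter (fun j => j ≤ t)) i ↔
      b ≤ t ∧ b.val % n = i.val := by
  simp [bundle, cyclicAlloc, Fin.ext_iff, and_assoc]

lemma key {n m : ℕ} (hn : 0 < n) (v : Fin m → ℝ) (hv : ∀ j, 0 ≤ v j)
    (p : Fin m)
    (hp1 : ∀ j k : Fin m, j ≤ k → k ≤ p → v j ≤ v k)
    (hp2 : ∀ j k : Fin m, p ≤ j → j ≤ k → v k ≤ v j)
    (t : Fin m) (i k : Fin n) (hik : i ≠ k) :
    bundle (cyclicAlloc n hn) (Finset.univ.filter (fun j => j ≤ t)) k = ∅ ∨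
    ∃ g ∈ bundle (cyclicAlloc n hn) (Finset.univ.filter (fun j => j ≤ t)) k,
      bval v (bundle (cyclicAlloc n hn) (Finset.univ.filter (fun j => j ≤ t)) i) ≥
        bval v ((bundle (cyclicAlloc n hn) (Finset.univ.filter (fun j => j ≤ t)) k).erase g) := by
  classical
  set S := Finset.univ.filter (fun j : Fin m => j ≤ t) with hS
  set Bk := bundle (cyclicAlloc n hn) S k with hBk
  set Bi := bundle (cyclicAlloc n hn) S i with hBi
  by_cases hE : Bk = ∅
  · exact Or.inl hE
  set δ := (n + i.val - k.val) % n with hδ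
  have hkn : k.val < n := k.isLt
  have hin : i.val < n := i.isLt
  have hδn : δ < n := Nat.mod_lt _ hn
  have hikv : i.val ≠ k.val := fun hc => hik (Fin.ext hc)
  have hδ0 : 0 < δ := by
    rcases Nat.lt_or_ge (n + i.val - k.val) n with h | h
    · rw [hδ, Nat.mod_eq_of_lt h]; omega
    · rw [hδ, Nat.mod_eq_sub_mod h, Nat.mod_eq_of_lt (by omega)]; omega
  have hmod : ∀ b : ℕ, b % n = k.val → (b + δ) % n = i.val := by
    intro b hb
    have hbk : b ≡ k.val [MOD n] := by
      unfold Nat.ModEq; rw [hb, Nat.mod_eq_of_lt hkn]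
    calc (b + δ) % n = (k.val + δ) % n := hbk.add_right δ
      _ = (k.val + (n + i.val - k.val)) % n := by rw [hδ, Nat.add_mod_mod]
      _ = (n + i.val) % n := by rw [show k.val + (n + i.val - k.val) = n + i.val by omega]
      _ = i.val := by rw [Nat.add_mod_left, Nat.mod_eq_of_lt hin]
  set bad : ℕ → Prop := fun b =>
    ¬(b + δ ≤ t.val ∧ b + δ ≤ p.val) ∧ ¬(n - δ ≤ b ∧ p.val < b - (n - δ)) with hbad
  have hlt : ∀ b b' : Fin m, b ∈ Bk → b' ∈ Bk → b.val < b'.val → bad b.val → ¬ bad b'.val := by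
    intro b b' hb hb' hltv hbadb
    rw [mem_bundle_cyclic] at hb hb'
    have hsep : n ≤ b'.val - b.val := by
      have hdvd : n ∣ b'.val - b.val := by
        have hme : b.val ≡ b'.val [MOD n] := by
          unfold Nat.ModEq; rw [hb.2, hb'.2]
        exact (Nat.modEq_iff_dvd' (le_of_lt hltv)).mp hme
      exact Nat.le_of_dvd (by omega) hdvd
    have ht' : b'.val ≤ t.val := hb'.1
    have h1 : b.val + δ ≤ t.val := by omega
    have h2 : p.val < b.val + δ := by
      by_contra hc
      exact hbadb.1 ⟨h1, by omega⟩
    intro hbadb'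
    exact hbadb'.2 ⟨by omega, by omega⟩
  have huniq : ∀ b b' : Fin m, b ∈ Bk → b' ∈ Bk → bad b.val → bad b'.val → b = b' := by
    intro b b' hb hb' h1 h2
    rcases lt_trichotomy b.val b'.val with h | h | h
    · exact absurd h2 (hlt _ _ hb hb' h h1)
    · exact Fin.ext h
    · exact absurd h1 (hlt _ _ hb' hb h h2)
  have hm0 : 0 < m := t.pos
  have main : ∀ g : Fin m, (∀ b ∈ Bk.erase g, ¬ bad b.val) →
      bval v (Bk.erase g) ≤ bval v Bi := by
    intro g hnb
    set F : Fin m → Fin m := fun b =>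
      if n - δ ≤ b.val ∧ p.val < b.val - (n - δ) then ⟨b.val - (n - δ), by omega⟩
      else ⟨(b.val + δ) % m, Nat.mod_lt _ hm0⟩ with hF
    have hFspec : ∀ b ∈ Bk.erase g, F b ∈ Bi ∧ v b ≤ v (F b) ∧
        ((p.val < (F b).val ∧ (F b).val + (n - δ) = b.val) ∨
         ((F b).val ≤ p.val ∧ (F b).val = b.val + δ)) := by
      intro b hb
      have hbBk : b ∈ Bk := Finset.mem_of_mem_erase hb
      have hbm := (mem_bundle_cyclic hn t k b).mp hbBk
      have hbt : b.val ≤ t.val := hbm.1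
      have hnbb := hnb b hb
      by_cases hc : n - δ ≤ b.val ∧ p.val < b.val - (n - δ)
      · have hFv : (F b).val = b.val - (n - δ) := by rw [hF]; simp [hc]
        have hFle : (F b).val ≤ b.val := by omega
        refine ⟨?_, ?_, Or.inl ⟨by omega, by omega⟩⟩
        · rw [mem_bundle_cyclic]
          refine ⟨Fin.le_def.mpr (by omega), ?_⟩
          have hmm := hmod b.val hbm.2
          rw [hFv]
          calc (b.val - (n - δ)) % n = (b.val - (n - δ) + n) % n := (Nat.add_mod_right _ n).symm
            _ = (b.val + δ) % n := by rw [show b.val - (n - δ) + n = b.val + δ by omega]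
            _ = i.val := hmm
        · exact hp2 (F b) b (Fin.le_def.mpr (by omega)) (Fin.le_def.mpr hFle)
      · have hcn : b.val + δ ≤ t.val ∧ b.val + δ ≤ p.val := by
          by_contra hcc
          exact hnbb ⟨hcc, hc⟩
        have hFv : (F b).val = b.val + δ := by
          rw [hF]; simp only [hc, if_false]
          exact Nat.mod_eq_of_lt (by omega)
        refine ⟨?_, ?_, Or.inr ⟨by omega, hFv⟩⟩
        · rw [mem_bundle_cyclic]
          exact ⟨Fin.le_def.mpr (by omega), by rw [hFv]; exact hmod b.val hbm.2⟩
        · exact hp1 b (F b) (Fin.le_def.mpr (by omega)) (Fin.le_def.mpr (by omega))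
    have hinj : Set.InjOn F (Bk.erase g) := by
      intro b hb b' hb' heq
      have h1 := (hFspec b (Finset.mem_coe.mp hb)).2.2
      have h2 := (hFspec b' (Finset.mem_coe.mp hb')).2.2
      have hvv : (F b).val = (F b').val := by rw [heq]
      apply Fin.ext
      rcases h1 with ⟨ha1, ha2⟩ | ⟨ha1, ha2⟩ <;> rcases h2 with ⟨hb1, hb2⟩ | ⟨hb1, hb2⟩ <;> omega
    simp only [bval]
    calc ∑ b ∈ Bk.erase g, v b ≤ ∑ b ∈ Bk.erase g, v (F b) :=
          Finset.sum_le_sum (fun b hb => (hFspec b hb).2.1)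
      _ = ∑ c ∈ (Bk.erase g).image F, v c :=
          (Finset.sum_image (fun a ha b hb h => hinj (Finset.mem_coe.mpr ha) (Finset.mem_coe.mpr hb) h)).symm
      _ ≤ ∑ c ∈ Bi, v c := by
          apply Finset.sum_le_sum_of_subset_of_nonneg
          · intro c hc
            obtain ⟨b, hb, rfl⟩ := Finset.mem_image.mp hc
            exact (hFspec b hb).1
          · intro c _ _; exact hv c
  by_cases hf : ∃ b ∈ Bk, bad b.val
  · obtain ⟨g, hg, hgbad⟩ := hf
    refine Or.inr ⟨g, hg, main g ?_⟩
    intro b hb hbbad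
    exact (Finset.ne_of_mem_erase hb) (huniq b g (Finset.mem_of_mem_erase hb) hg hbbad hgbad)
  · obtain ⟨g, hg⟩ := Finset.nonempty_iff_ne_empty.mpr hE
    push_neg at hf
    exact Or.inr ⟨g, hg, main g (fun b hb => hf b (Finset.mem_of_mem_erase hb))⟩

/-- With single-peaked nonnegative valuations over goods arriving one per round
(with `m = α·n`), the cyclic allocation giving agent `i` the goods
`g_i, g_{i+n}, …` is TEF1. -/
theorem stmt7 (n m α : ℕ) (hn : 0 < n) (hα : 0 < α) (hm : m = α * n)
    (v : Fin n → Fin m → ℝ) (hv : ∀ i j, 0 ≤ v i j) (hsp : SinglePeaked v) :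
    ∀ t : Fin m, EF1goods v (cyclicAlloc n hn) (Finset.univ.filter (fun j => j ≤ t)) := by
  intro t
  intro i j
  by_cases hij : i = j
  · subst hij
    by_cases hE : bundle (cyclicAlloc n hn) (Finset.univ.filter (fun b => b ≤ t)) i = ∅
    · exact Or.inl hE
    · obtain ⟨g, hg⟩ := Finset.nonempty_iff_ne_empty.mpr hE
      refine Or.inr ⟨g, hg, ?_⟩
      apply Finset.sum_le_sum_of_subset_of_nonneg (Finset.erase_subset _ _)
      intro b _ _; exact hv i b
  · obtain ⟨p, hp1, hp2⟩ := hsp i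
    exact key hn (v i) (hv i) p hp1 hp2 t i j hij
end

section
/- Suppose n agents have additive nonpositive single-dipped valuations over chores c_1, …, c_m arriving one per round, with m = αn for a positive integer α. Allocate chores cyclically so that agent i receives chores c_i, c_{i+n}, …, c_{i+(α−1)n}. Then the resulting allocation is TEF1 for chores: after every round t, the cumulative allocation is EF1 for chores. -/
open Finset

/-- Single-dipped profile: each agent's values are nonincreasing up to her dip item
and nondecreasing afterwards. -/
def SingleDipped {n m : ℕ} (v : Fin n → Fin m → ℝ) : Prop :=
  ∀ i : Fin n, ∃ p : Fin m,
    (∀ j k : Fin m, j ≤ k → k ≤ p → v i k ≤ v i j) ∧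
    (∀ j k : Fin m, p ≤ j → j ≤ k → v i j ≤ v i k)

/- ---------- auxiliary lemmas ---------- -/

private lemma eq_of_mod_eq_of_close {n x y : ℕ} (h : x % n = y % n)
    (h1 : x < y + n) (h2 : y < x + n) : x = y := by
  rcases le_total x y with hle | hle
  · have hd : n ∣ y - x := (Nat.modEq_iff_dvd' hle).mp h
    have := Nat.eq_zero_of_dvd_of_lt hd (by omega)
    omega
  · have hd : n ∣ x - y := (Nat.modEq_iff_dvd' hle).mp h.symm
    have := Nat.eq_zero_of_dvd_of_lt hd (by omega)
    omega

private lemma add_d_mod {n i j x : ℕ} (hi : i < n) (hj : j < n) (hx : x % n = i) :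
    (x + (n + j - i) % n) % n = j := by
  have h1 : (x + (n + j - i) % n) % n = (i + (n + j - i)) % n := by
    apply Nat.ModEq.add
    · show x % n = i % n
      rw [hx, Nat.mod_eq_of_lt hi]
    · exact Nat.mod_modEq _ _
  have h2 : i + (n + j - i) = n + j := by omega
  rw [h1, h2, Nat.add_mod_left, Nat.mod_eq_of_lt hj]

private lemma sub_d_mod {n i j x : ℕ} (hn : 0 < n) (hi : i < n) (hj : j < n)
    (hx : x % n = i) (hge : n - (n + j - i) % n ≤ x) :
    (x - (n - (n + j - i) % n)) % n = j := by
  have hdn : (n + j - i) % n < n := Nat.mod_lt _ hn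
  have h1 : x - (n - (n + j - i) % n) + n = x + (n + j - i) % n := by omega
  have h2 : (x - (n - (n + j - i) % n)) % n
      = (x - (n - (n + j - i) % n) + n) % n := (Nat.add_mod_right _ _).symm
  rw [h2, h1]
  exact add_d_mod hi hj hx

private def gmap {m : ℕ} (n d q : ℕ) (hqm : q < m) (x : Fin m) : Fin m :=
  if _ : x.val + d ≤ q then ⟨x.val + d, by omega⟩
  else ⟨x.val - (n - d), by have := x.isLt; omega⟩

private lemma gmap_pos {m n d q : ℕ} (hqm : q < m) {x : Fin m} (h : x.val + d ≤ q) :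
    (gmap n d q hqm x).val = x.val + d := by simp [gmap, h]

private lemma gmap_neg {m n d q : ℕ} (hqm : q < m) {x : Fin m} (h : ¬ (x.val + d ≤ q)) :
    (gmap n d q hqm x).val = x.val - (n - d) := by simp [gmap, h]

/-- With single-dipped nonpositive valuations over chores arriving one per round
(with `m = α·n`), the cyclic allocation giving agent `i` the chores
`c_i, c_{i+n}, …` is TEF1 for chores. -/
theorem stmt8 (n m α : ℕ) (hn : 0 < n) (hα : 0 < α) (hm : m = α * n)
    (v : Fin n → Fin m → ℝ) (hv : ∀ i j, v i j ≤ 0) (hsd : SingleDipped v) :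
    ∀ t : Fin m, EF1chores v (cyclicAlloc n hn) (Finset.univ.filter (fun j => j ≤ t)) := by
  intro t i j
  classical
  set B : Fin n → Finset (Fin m) :=
    bundle (cyclicAlloc n hn) (Finset.univ.filter (fun j => j ≤ t)) with hB
  have hmem : ∀ (k : Fin n) (x : Fin m),
      x ∈ B k ↔ x.val ≤ t.val ∧ x.val % n = k.val := by
    intro k x
    rw [hB]
    simp only [bundle, cyclicAlloc, Finset.mem_filter, Finset.mem_univ, true_and,
      Fin.ext_iff, Fin.le_def]
  by_cases hBi : B i = ∅
  · exact Or.inl hBi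
  right
  have hBine : (B i).Nonempty := Finset.nonempty_iff_ne_empty.mpr hBi
  obtain ⟨p, hp1, hp2⟩ := hsd i
  set q : ℕ := min p.val t.val with hq
  have hqt : q ≤ t.val := min_le_right _ _
  have hqp : q ≤ p.val := min_le_left _ _
  set d : ℕ := (n + j.val - i.val) % n with hd
  have hdn : d < n := Nat.mod_lt _ hn
  have hm' : q < m := lt_of_le_of_lt hqt t.isLt
  -- valuations are nonincreasing up to q (among observed items) and nondecreasing after q
  have hq1 : ∀ a b : Fin m, a.val ≤ b.val → b.val ≤ q → v i b ≤ v i a := by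
    intro a b hab hbq
    exact hp1 a b (Fin.le_def.mpr hab) (Fin.le_def.mpr (by omega))
  have hq2 : ∀ a b : Fin m, q < a.val → a.val ≤ b.val → b.val ≤ t.val → v i a ≤ v i b := by
    intro a b hqa hab hbt
    rcases le_or_gt p.val t.val with hpt | hpt
    · exact hp2 a b (Fin.le_def.mpr (by omega)) (Fin.le_def.mpr hab)
    · exact absurd hqa (by omega)
  -- main step
  have key : ∀ c ∈ B i, (∀ x ∈ (B i).erase c, ¬ (q < x.val + d ∧ x.val ≤ q + n - d)) →
      bval (v i) ((B i).erase c) ≥ bval (v i) (B j) := by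
    intro c hc hnb
    set E := (B i).erase c with hE
    have hgood : ∀ x ∈ E, gmap n d q hm' x ∈ B j ∧ v i (gmap n d q hm' x) ≤ v i x := by
      intro x hx
      have hxB : x ∈ B i := Finset.mem_of_mem_erase hx
      obtain ⟨hxt, hxi⟩ := (hmem i x).mp hxB
      by_cases hxd : x.val + d ≤ q
      · have hGv := gmap_pos (n := n) hm' (x := x) hxd
        constructor
        · refine (hmem j _).mpr ⟨by omega, ?_⟩
          rw [hGv, hd]
          exact add_d_mod i.isLt j.isLt hxi
        · exact hq1 x _ (by omega) (by omega)
      · have hbadx := hnb x hx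
        have hxgt : q + n - d < x.val := by
          rcases not_and_or.mp hbadx with h | h <;> omega
        have hGv := gmap_neg (n := n) hm' (x := x) hxd
        constructor
        · refine (hmem j _).mpr ⟨by omega, ?_⟩
          rw [hGv, hd]
          exact sub_d_mod hn i.isLt j.isLt hxi (by rw [← hd]; omega)
        · exact hq2 _ x (by omega) (by omega) hxt
    have hinjE : ∀ x ∈ E, ∀ y ∈ E, gmap n d q hm' x = gmap n d q hm' y → x = y := by
      intro x hx y hy hGxy
      have hxB : x ∈ B i := Finset.mem_of_mem_erase hx
      have hyB : y ∈ B i := Finset.mem_of_mem_erase hy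
      obtain ⟨hxt, hxi⟩ := (hmem i x).mp hxB
      obtain ⟨hyt, hyi⟩ := (hmem i y).mp hyB
      have hvv : (gmap n d q hm' x).val = (gmap n d q hm' y).val := congrArg Fin.val hGxy
      apply Fin.ext
      by_cases hxd : x.val + d ≤ q <;> by_cases hyd : y.val + d ≤ q
      · rw [gmap_pos (n := n) hm' hxd, gmap_pos (n := n) hm' hyd] at hvv; omega
      · have hy' : q + n - d < y.val := by
          rcases not_and_or.mp (hnb y hy) with h | h <;> omega
        rw [gmap_pos (n := n) hm' hxd, gmap_neg (n := n) hm' hyd] at hvv; omega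
      · have hx' : q + n - d < x.val := by
          rcases not_and_or.mp (hnb x hx) with h | h <;> omega
        rw [gmap_neg (n := n) hm' hxd, gmap_pos (n := n) hm' hyd] at hvv; omega
      · have hx' : q + n - d < x.val := by
          rcases not_and_or.mp (hnb x hx) with h | h <;> omega
        have hy' : q + n - d < y.val := by
          rcases not_and_or.mp (hnb y hy) with h | h <;> omega
        rw [gmap_neg (n := n) hm' hxd, gmap_neg (n := n) hm' hyd] at hvv; omega
    have hsub : E.image (gmap n d q hm') ⊆ B j := by
      intro y hy
      obtain ⟨x, hx, rfl⟩ := Finset.mem_image.mp hy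
      exact (hgood x hx).1
    have hsdiff := Finset.sum_sdiff (f := v i) hsub
    have hneg : ∑ x ∈ (B j) \ (E.image (gmap n d q hm')), v i x ≤ 0 :=
      Finset.sum_nonpos (fun x _ => hv i x)
    have h2 : ∑ x ∈ E.image (gmap n d q hm'), v i x = ∑ x ∈ E, v i (gmap n d q hm' x) :=
      Finset.sum_image hinjE
    have h3 : ∑ x ∈ E, v i (gmap n d q hm' x) ≤ ∑ x ∈ E, v i x :=
      Finset.sum_le_sum (fun x hx => (hgood x hx).2)
    show bval (v i) E ≥ bval (v i) (B j)
    unfold bval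
    linarith
  by_cases hbad : ∃ x ∈ B i, q < x.val + d ∧ x.val ≤ q + n - d
  · obtain ⟨c, hcB, hcbad⟩ := hbad
    refine ⟨c, hcB, key c hcB ?_⟩
    intro x hx hxbad
    have hxB : x ∈ B i := Finset.mem_of_mem_erase hx
    have hxc : x ≠ c := Finset.ne_of_mem_erase hx
    apply hxc
    apply Fin.ext
    apply eq_of_mod_eq_of_close (n := n)
    · rw [((hmem i x).mp hxB).2, ((hmem i c).mp hcB).2]
    · omega
    · omega
  · obtain ⟨c, hcB⟩ := hBine
    refine ⟨c, hcB, key c hcB ?_⟩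
    intro x hx hxbad
    exact hbad ⟨x, Finset.mem_of_mem_erase hx, hxbad⟩
end

section
/- Consider two agents and four goods g_1, g_2, g_3, g_4 arriving one per round, with valuations v_1 = (1.1, 1.1, 2, 2) and v_2 = (2, 2, 1.1, 1.1). Then every TEF1 allocation gives each agent exactly one good from {g_1, g_2} and exactly one good from {g_3, g_4}, and every such allocation is Pareto-dominated by the allocation giving {g_1, g_2} to agent 2 and {g_3, g_4} to agent 1. Consequently, no allocation for this instance is both TEF1 and Pareto-optimal. -/
open Finset

def TEF1goods {n m : ℕ} (v : Fin n → Fin m → ℝ) (A : Fin m → Fin n) : Prop :=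
  ∀ t : Fin m, EF1goods v A (Finset.univ.filter (fun j => j ≤ t))

/-- Value of agent `i`'s final bundle. -/
def finalVal {n m : ℕ} (v : Fin n → Fin m → ℝ) (A : Fin m → Fin n) (i : Fin n) : ℝ :=
  bval (v i) (bundle A Finset.univ i)

def ParetoDominates {n m : ℕ} (v : Fin n → Fin m → ℝ) (A' A : Fin m → Fin n) : Prop :=
  (∀ i, finalVal v A' i ≥ finalVal v A i) ∧ ∃ i, finalVal v A' i > finalVal v A i

def ParetoOptimal {n m : ℕ} (v : Fin n → Fin m → ℝ) (A : Fin m → Fin n) : Prop :=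
  ¬ ∃ A' : Fin m → Fin n, ParetoDominates v A' A

/-- The 2-agent, 4-good instance with valuations (1.1, 1.1, 2, 2) and
(2, 2, 1.1, 1.1).-/
def v9 : Fin 2 → Fin 4 → ℝ := ![![1.1, 1.1, 2, 2], ![2, 2, 1.1, 1.1]]

set_option maxHeartbeats 1000000 in
lemma key9 : ∀ A : Fin 4 → Fin 2, TEF1goods v9 A →
      (∀ i : Fin 2,
          ((bundle A Finset.univ i).filter (fun j => j.val < 2)).card = 1 ∧
          ((bundle A Finset.univ i).filter (fun j => 2 ≤ j.val)).card = 1) ∧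
        ParetoDominates v9 ![1, 1, 0, 0] A := by
  intro A hT
  have h2 : ∀ i : Fin 2, i = 0 ∨ i = 1 := by decide
  have hA : A = ![A 0, A 1, A 2, A 3] := by funext j; fin_cases j <;> rfl
  rcases h2 (A 0) with h0 | h0 <;> rcases h2 (A 1) with h1 | h1 <;>
    rcases h2 (A 2) with h2' | h2' <;> rcases h2 (A 3) with h3 | h3 <;>
    rw [h0, h1, h2', h3] at hA <;> rw [hA] at hT ⊢ <;>
  first
  | -- good cases
    (refine ⟨by decide, fun i => ?_, 0, ?_⟩
     · fin_cases i <;>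
       · simp [finalVal, bval, bundle, Finset.sum_filter, Fin.sum_univ_four, v9]
         norm_num
     · simp [finalVal, bval, bundle, Finset.sum_filter, Fin.sum_univ_four, v9]
       norm_num)
  | -- bad cases: derive a contradiction from some (t, i, j)
    (exfalso
     first
     | (rcases hT 1 1 0 with hemp | ⟨g, hg, hge⟩
        · revert hemp; decide
        · fin_cases g <;>
            first
            | exact absurd hg (by decide)
            | (simp [bval, bundle, Finset.sum_filter, Fin.sum_univ_four, v9,
                Finset.mem_erase] at hge; norm_num at hge))
     | (rcases hT 1 0 1 with hemp | ⟨g, hg, hge⟩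
        · revert hemp; decide
        · fin_cases g <;>
            first
            | exact absurd hg (by decide)
            | (simp [bval, bundle, Finset.sum_filter, Fin.sum_univ_four, v9,
                Finset.mem_erase] at hge; norm_num at hge))
     | (rcases hT 3 1 0 with hemp | ⟨g, hg, hge⟩
        · revert hemp; decide
        · fin_cases g <;>
            first
            | exact absurd hg (by decide)
            | (simp [bval, bundle, Finset.sum_filter, Fin.sum_univ_four, v9,
                Finset.mem_erase] at hge; norm_num at hge))
     | (rcases hT 3 0 1 with hemp | ⟨g, hg, hge⟩
        · revert hemp; decide
        · fin_cases g <;>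
            first
            | exact absurd hg (by decide)
            | (simp [bval, bundle, Finset.sum_filter, Fin.sum_univ_four, v9,
                Finset.mem_erase] at hge; norm_num at hge)))

/-- In this instance every TEF1 allocation gives each agent exactly one good from
`{g₁, g₂}` and exactly one from `{g₃, g₄}`, every such allocation is
Pareto-dominated by the allocation giving `{g₁, g₂}` to agent 2 and `{g₃, g₄}` to
agent 1, and hence no allocation is both TEF1 and Pareto-optimal. -/
theorem stmt9 :
    (∀ A : Fin 4 → Fin 2, TEF1goods v9 A →
      (∀ i : Fin 2,
          ((bundle A Finset.univ i).filter (fun j => j.val < 2)).card = 1 ∧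
          ((bundle A Finset.univ i).filter (fun j => 2 ≤ j.val)).card = 1) ∧
        ParetoDominates v9 ![1, 1, 0, 0] A) ∧
    ¬ ∃ A : Fin 4 → Fin 2, TEF1goods v9 A ∧ ParetoOptimal v9 A := by
  refine ⟨key9, ?_⟩
  rintro ⟨A, hT, hPO⟩
  exact hPO ⟨![1, 1, 0, 0], (key9 A hT).2⟩
end

section
/- Let n agents have additive nonnegative valuations over goods, and let O_1 and O_2 be two disjoint finite sets of goods. Let A = (A_1, …, A_n) be the round-robin allocation of O_1 with picking order 1, 2, …, n (cycling), and let B = (B_1, …, B_n) be the round-robin allocation of O_2 with picking order n, n−1, …, 1 (cycling), where in each turn the picking agent takes a good maximizing her value among remaining goods. Then the combined allocation (A_1 ∪ B_1, …, A_n ∪ B_n) is EF1 for goods. -/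
open Finset


lemma rr_core {α : Type*} {n c : ℕ} {r s : ℕ} (hr : r < n)
    (v : α → ℝ) (hv : ∀ a, 0 ≤ v a) (e : Fin c → α)
    (hpref : ∀ k k' : Fin c, k.val % n = r → k.val ≤ k'.val → v (e k') ≤ v (e k))
    (d : ℕ) (hd : (r ≤ s ∧ d = s - r) ∨ (s < r ∧ d = s + n - r)) :
    ∑ k ∈ univ.filter (fun k : Fin c => k.val % n = s ∧ d ≤ k.val), v (e k)
      ≤ ∑ k ∈ univ.filter (fun k : Fin c => k.val % n = r), v (e k) := by
  have key : ∀ k : Fin c, k.val % n = s → d ≤ k.val → (k.val - d) % n = r := by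
    intro k hk hdk
    obtain ⟨q, hdm⟩ : ∃ q, n * q + s = k.val := ⟨k.val / n, by rw [← hk]; exact Nat.div_add_mod _ _⟩
    rcases hd with ⟨hrs, rfl⟩ | ⟨hsr, rfl⟩
    · have h1 : k.val - (s - r) = n * q + r := by omega
      rw [h1, Nat.mul_add_mod, Nat.mod_eq_of_lt hr]
    · have hq0 : q ≠ 0 := by rintro h; rw [h, Nat.mul_zero] at hdm; omega
      obtain ⟨q', rfl⟩ : ∃ q', q = q' + 1 := ⟨q - 1, by omega⟩
      have hmul : n * (q' + 1) = n * q' + n := by ring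
      have h1 : k.val - (s + n - r) = n * q' + r := by omega
      rw [h1, Nat.mul_add_mod, Nat.mod_eq_of_lt hr]
  set S := univ.filter (fun k : Fin c => k.val % n = s ∧ d ≤ k.val) with hS
  let f : Fin c → Fin c := fun k => ⟨k.val - d, lt_of_le_of_lt (Nat.sub_le _ _) k.isLt⟩
  have hmemS : ∀ k ∈ S, k.val % n = s ∧ d ≤ k.val := by
    intro k hk; simpa [hS, Finset.mem_filter] using hk
  calc ∑ k ∈ S, v (e k) ≤ ∑ k ∈ S, v (e (f k)) := by
        refine Finset.sum_le_sum ?_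
        intro k hk
        obtain ⟨h1, h2⟩ := hmemS k hk
        exact hpref (f k) k (key k h1 h2) (Nat.sub_le _ _)
    _ = ∑ k ∈ S.image f, v (e k) := by
        rw [Finset.sum_image]
        intro x hx y hy hxy
        obtain ⟨_, hx2⟩ := hmemS x hx
        obtain ⟨_, hy2⟩ := hmemS y hy
        have : x.val - d = y.val - d := congrArg Fin.val hxy
        exact Fin.ext (by omega)
    _ ≤ ∑ k ∈ univ.filter (fun k : Fin c => k.val % n = r), v (e k) := by
        refine Finset.sum_le_sum_of_subset_of_nonneg ?_ (fun k _ _ => hv _)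
        intro k hk
        simp only [Finset.mem_image] at hk
        obtain ⟨x, hx, rfl⟩ := hk
        obtain ⟨h1, h2⟩ := hmemS x hx
        simp only [Finset.mem_filter, Finset.mem_univ, true_and]
        exact key x h1 h2

/-- If `r ≤ s` (agent of class `r` always picks before agent of class `s`),
full envy-freeness of class `r` towards class `s`. -/
lemma rr_L1 {α : Type*} {n c : ℕ} {r s : ℕ} (hr : r < n) (hrs : r ≤ s)
    (v : α → ℝ) (hv : ∀ a, 0 ≤ v a) (e : Fin c → α)
    (hpref : ∀ k k' : Fin c, k.val % n = r → k.val ≤ k'.val → v (e k') ≤ v (e k)) :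
    ∑ k ∈ univ.filter (fun k : Fin c => k.val % n = s), v (e k)
      ≤ ∑ k ∈ univ.filter (fun k : Fin c => k.val % n = r), v (e k) := by
  have h := rr_core hr v hv e hpref (s - r) (Or.inl ⟨hrs, rfl⟩)
  have heq : univ.filter (fun k : Fin c => k.val % n = s ∧ s - r ≤ k.val)
      = univ.filter (fun k : Fin c => k.val % n = s) := by
    ext k
    simp only [Finset.mem_filter, Finset.mem_univ, true_and, and_iff_left_iff_imp]
    intro hk
    have : k.val % n ≤ k.val := Nat.mod_le _ _
    omega
  rwa [heq] at h

/-- If `s < r`, envy-freeness up to the first item picked by the class-`s` agent. -/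
lemma rr_L2 {α : Type*} {n c : ℕ} {r s : ℕ} (hr : r < n) (hsr : s < r)
    (v : α → ℝ) (hv : ∀ a, 0 ≤ v a) (e : Fin c → α)
    (hpref : ∀ k k' : Fin c, k.val % n = r → k.val ≤ k'.val → v (e k') ≤ v (e k))
    (hsc : s < c) :
    ∑ k ∈ univ.filter (fun k : Fin c => k.val % n = s), v (e k)
      ≤ (∑ k ∈ univ.filter (fun k : Fin c => k.val % n = r), v (e k)) + v (e ⟨s, hsc⟩) := by
  have h := rr_core hr v hv e hpref (s + n - r) (Or.inr ⟨hsr, rfl⟩)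
  have hs : s < n := lt_trans hsr hr
  have hsplit : univ.filter (fun k : Fin c => k.val % n = s)
      = insert ⟨s, hsc⟩ (univ.filter (fun k : Fin c => k.val % n = s ∧ s + n - r ≤ k.val)) := by
    ext k
    simp only [Finset.mem_insert, Finset.mem_filter, Finset.mem_univ, true_and, Fin.ext_iff]
    constructor
    · intro hk
      by_cases hks : k.val = s
      · exact Or.inl hks
      · refine Or.inr ⟨hk, ?_⟩
        obtain ⟨q, hdm⟩ : ∃ q, n * q + s = k.val :=
          ⟨k.val / n, by rw [← hk]; exact Nat.div_add_mod _ _⟩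
        have hq0 : q ≠ 0 := by rintro rfl; rw [Nat.mul_zero] at hdm; omega
        have : n ≤ n * q := Nat.le_mul_of_pos_right n (by omega)
        omega
    · rintro (hk | ⟨hk, _⟩)
      · rw [hk]; exact Nat.mod_eq_of_lt hs
      · exact hk
  have hnotmem : (⟨s, hsc⟩ : Fin c) ∉
      univ.filter (fun k : Fin c => k.val % n = s ∧ s + n - r ≤ k.val) := by
    simp only [Finset.mem_filter, Finset.mem_univ, true_and, not_and]
    intro _; omega
  rw [hsplit, Finset.sum_insert hnotmem]
  linarith

/-- If `c ≤ s` then the class-`s` agent gets nothing. -/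
lemma rr_empty {n c : ℕ} {s : ℕ} (hcs : c ≤ s) :
    (univ.filter (fun k : Fin c => k.val % n = s)) = ∅ := by
  ext k
  simp only [Finset.mem_filter, Finset.mem_univ, true_and, Finset.notMem_empty, iff_false]
  intro hk
  have h1 : k.val % n ≤ k.val := Nat.mod_le _ _
  have h2 := k.isLt
  omega

/-- `RRAlloc v O pick A` says that `A` is an outcome of the round-robin procedure on
the item set `O` in which the agent picking at step `k` is `pick k`, and each
picking agent takes an item she values most among the remaining items
(equivalently, there is an enumeration `e` of `O` in pick order in which every
picked item is weakly preferred by its picker to all later items). -/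
def RRAlloc {α : Type*} [DecidableEq α] {n : ℕ} (v : Fin n → α → ℝ)
    (O : Finset α) (pick : ℕ → Fin n) (A : Fin n → Finset α) : Prop :=
  ∃ e : Fin O.card → α, Function.Injective e ∧ (∀ k, e k ∈ O) ∧
    (∀ i : Fin n, A i = (Finset.univ.filter (fun k => pick k.val = i)).image e) ∧
    (∀ k k' : Fin O.card, k ≤ k' → v (pick k.val) (e k) ≥ v (pick k.val) (e k'))

/-- Round-robin on `O₁` with picking order `1, 2, …, n` (cycling) followed by
round-robin on disjoint `O₂` with picking order `n, n−1, …, 1` (cycling): the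
combined allocation is EF1 for goods. -/
theorem stmt13 {α : Type*} [DecidableEq α] (n : ℕ) (hn : 0 < n)
    (v : Fin n → α → ℝ) (hv : ∀ i a, 0 ≤ v i a)
    (O₁ O₂ : Finset α) (hdisj : Disjoint O₁ O₂)
    (A B : Fin n → Finset α)
    (hA : RRAlloc v O₁ (fun k => ⟨k % n, Nat.mod_lt _ hn⟩) A)
    (hB : RRAlloc v O₂ (fun k => ⟨n - 1 - k % n, by omega⟩) B) :
    ∀ i j : Fin n, A j ∪ B j = ∅ ∨
      ∃ g ∈ A j ∪ B j,
        ∑ x ∈ A i ∪ B i, v i x ≥ ∑ x ∈ (A j ∪ B j).erase g, v i x := by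
  obtain ⟨e₁, he₁, hmem₁, hAeq, hApref⟩ := hA
  obtain ⟨e₂, he₂, hmem₂, hBeq, hBpref⟩ := hB
  -- rewrite the filters in terms of residues
  have hAeq' : ∀ t : Fin n,
      A t = (univ.filter (fun k : Fin O₁.card => k.val % n = t.val)).image e₁ := by
    intro t; rw [hAeq t]; congr 1; ext k
    simp only [Finset.mem_filter, Finset.mem_univ, true_and, Fin.ext_iff]
  have hBeq' : ∀ t : Fin n,
      B t = (univ.filter (fun k : Fin O₂.card => k.val % n = n - 1 - t.val)).image e₂ := by
    intro t; rw [hBeq t]; congr 1; ext k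
    simp only [Finset.mem_filter, Finset.mem_univ, true_and, Fin.ext_iff]
    have h1 : k.val % n < n := Nat.mod_lt _ hn
    have h2 := t.isLt
    omega
  have hprefA : ∀ (t : Fin n) (k k' : Fin O₁.card),
      k.val % n = t.val → k.val ≤ k'.val → v t (e₁ k') ≤ v t (e₁ k) := by
    intro t k k' hk hle
    have h := hApref k k' hle
    simp only at h
    rwa [show (⟨k.val % n, Nat.mod_lt _ hn⟩ : Fin n) = t from Fin.ext hk] at h
  have hprefB : ∀ (t : Fin n) (k k' : Fin O₂.card),
      k.val % n = n - 1 - t.val → k.val ≤ k'.val → v t (e₂ k') ≤ v t (e₂ k) := by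
    intro t k k' hk hle
    have h := hBpref k k' hle
    simp only at h
    have h1 : k.val % n < n := Nat.mod_lt _ hn
    have h2 := t.isLt
    rwa [show (⟨n - 1 - k.val % n, by omega⟩ : Fin n) = t from Fin.ext (show n - 1 - k.val % n = t.val by omega)] at h
  intro i j
  have hsumA : ∀ t : Fin n, ∑ x ∈ A t, v i x
      = ∑ k ∈ univ.filter (fun k : Fin O₁.card => k.val % n = t.val), v i (e₁ k) := by
    intro t; rw [hAeq' t]; exact Finset.sum_image (fun x _ y _ h => he₁ h)
  have hsumB : ∀ t : Fin n, ∑ x ∈ B t, v i x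
      = ∑ k ∈ univ.filter (fun k : Fin O₂.card => k.val % n = n - 1 - t.val), v i (e₂ k) := by
    intro t; rw [hBeq' t]; exact Finset.sum_image (fun x _ y _ h => he₂ h)
  have hAsub : ∀ t : Fin n, A t ⊆ O₁ := by
    intro t; rw [hAeq' t]; exact Finset.image_subset_iff.mpr (fun k _ => hmem₁ k)
  have hBsub : ∀ t : Fin n, B t ⊆ O₂ := by
    intro t; rw [hBeq' t]; exact Finset.image_subset_iff.mpr (fun k _ => hmem₂ k)
  have hdisjt : ∀ t t' : Fin n, Disjoint (A t) (B t') :=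
    fun t t' => hdisj.mono (hAsub t) (hBsub t')
  have hBnn : 0 ≤ ∑ x ∈ B i, v i x := Finset.sum_nonneg fun x _ => hv i x
  have hAnn : 0 ≤ ∑ x ∈ A i, v i x := Finset.sum_nonneg fun x _ => hv i x
  rcases lt_trichotomy i.val j.val with hij | hij | hij
  · -- i picks before j in A, j picks before i in B
    have hAij : ∑ x ∈ A j, v i x ≤ ∑ x ∈ A i, v i x := by
      rw [hsumA j, hsumA i]
      exact rr_L1 i.isLt (le_of_lt hij) (v i) (hv i) e₁ (hprefA i)
    by_cases hsc : n - 1 - j.val < O₂.card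
    · have hBij : ∑ x ∈ B j, v i x
          ≤ (∑ x ∈ B i, v i x) + v i (e₂ ⟨n - 1 - j.val, hsc⟩) := by
        rw [hsumB j, hsumB i]
        have hj := j.isLt
        exact rr_L2 (by omega) (by omega) (v i) (hv i) e₂ (hprefB i) hsc
      have hg : e₂ ⟨n - 1 - j.val, hsc⟩ ∈ B j := by
        rw [hBeq' j]
        refine Finset.mem_image.mpr ⟨⟨n - 1 - j.val, hsc⟩, ?_, rfl⟩
        simp only [Finset.mem_filter, Finset.mem_univ, true_and]
        exact Nat.mod_eq_of_lt (by omega)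
      right
      refine ⟨e₂ ⟨n - 1 - j.val, hsc⟩, Finset.mem_union_right _ hg, ?_⟩
      rw [Finset.sum_erase_eq_sub (Finset.mem_union_right _ hg),
        Finset.sum_union (hdisjt j j), Finset.sum_union (hdisjt i i)]
      linarith
    · have hBj : B j = ∅ := by
        rw [hBeq' j, rr_empty (by omega)]; exact Finset.image_empty _
      by_cases hAj : A j = ∅
      · left; rw [hAj, hBj]; exact Finset.empty_union _
      · right
        obtain ⟨g, hg⟩ := Finset.nonempty_iff_ne_empty.mpr hAj
        refine ⟨g, Finset.mem_union_left _ hg, ?_⟩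
        rw [Finset.sum_erase_eq_sub (Finset.mem_union_left _ hg),
          Finset.sum_union (hdisjt j j), Finset.sum_union (hdisjt i i)]
        have hBj0 : ∑ x ∈ B j, v i x = 0 := by rw [hBj]; exact Finset.sum_empty
        have := hv i g
        linarith
  · -- i = j
    have : i = j := Fin.ext hij
    subst this
    by_cases hU : A i ∪ B i = ∅
    · left; exact hU
    · right
      obtain ⟨g, hg⟩ := Finset.nonempty_iff_ne_empty.mpr hU
      refine ⟨g, hg, ?_⟩
      rw [Finset.sum_erase_eq_sub hg]
      have := hv i g
      linarith
  · -- j picks before i in A, i picks before j in B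
    have hBij : ∑ x ∈ B j, v i x ≤ ∑ x ∈ B i, v i x := by
      rw [hsumB j, hsumB i]
      have hi := i.isLt
      exact rr_L1 (by omega) (by omega) (v i) (hv i) e₂ (hprefB i)
    by_cases hsc : j.val < O₁.card
    · have hAij : ∑ x ∈ A j, v i x
          ≤ (∑ x ∈ A i, v i x) + v i (e₁ ⟨j.val, hsc⟩) := by
        rw [hsumA j, hsumA i]
        exact rr_L2 i.isLt hij (v i) (hv i) e₁ (hprefA i) hsc
      have hg : e₁ ⟨j.val, hsc⟩ ∈ A j := by
        rw [hAeq' j]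
        refine Finset.mem_image.mpr ⟨⟨j.val, hsc⟩, ?_, rfl⟩
        simp only [Finset.mem_filter, Finset.mem_univ, true_and]
        exact Nat.mod_eq_of_lt j.isLt
      right
      refine ⟨e₁ ⟨j.val, hsc⟩, Finset.mem_union_left _ hg, ?_⟩
      rw [Finset.sum_erase_eq_sub (Finset.mem_union_left _ hg),
        Finset.sum_union (hdisjt j j), Finset.sum_union (hdisjt i i)]
      linarith
    · have hAj : A j = ∅ := by
        rw [hAeq' j, rr_empty (by omega)]; exact Finset.image_empty _
      by_cases hBj : B j = ∅
      · left; rw [hAj, hBj]; exact Finset.empty_union _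
      · right
        obtain ⟨g, hg⟩ := Finset.nonempty_iff_ne_empty.mpr hBj
        refine ⟨g, Finset.mem_union_right _ hg, ?_⟩
        rw [Finset.sum_erase_eq_sub (Finset.mem_union_right _ hg),
          Finset.sum_union (hdisjt j j), Finset.sum_union (hdisjt i i)]
        have hAj0 : ∑ x ∈ A j, v i x = 0 := by rw [hAj]; exact Finset.sum_empty
        have := hv i g
        linarith
end

section
/- Let n agents have additive nonpositive valuations over chores, and let O_1 and O_2 be two disjoint finite sets of chores with |O_1| = |O_2| = kn for some integer k (padding with zero-valued chores otherwise). Let A be the round-robin allocation of O_1 with picking order 1, …, n and B the round-robin allocation of O_2 with picking order n, …, 1, each picking agent taking a least-disliked (maximum-value) remaining chore. Then the combined allocation (A_1 ∪ B_1, …, A_n ∪ B_n) is EF1 for chores. -/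
open Finset

private lemma idx_lt {r t n k : ℕ} (hr : r < k) (ht : t < n) : r * n + t < k * n := by
  calc r * n + t < r * n + n := by omega
    _ = (r + 1) * n := by ring
    _ ≤ k * n := Nat.mul_le_mul_right n hr

private lemma mod_fact {r t n k : ℕ} (ht : t < n) : ((r % k) * n + t) % n = t := by
  rw [Nat.add_comm, Nat.add_mul_mod_self_right, Nat.mod_eq_of_lt ht]

/-- The sum of values of a round-robin bundle, expressed as a sum over rounds. -/
private lemma rr_sum {α : Type*} [DecidableEq α] {n k t : ℕ} (hk : 0 < k) (ht : t < n)
    {m : ℕ} (hm : m = k * n) (e : Fin m → α) (he : Function.Injective e) (w : α → ℝ)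
    (P : Fin m → Prop) [DecidablePred P] (hP : ∀ s, P s ↔ s.val % n = t) :
    ∑ x ∈ (Finset.univ.filter (fun s => P s)).image e, w x
      = ∑ r ∈ Finset.range k,
          w (e ⟨(r % k) * n + t, by rw [hm]; exact idx_lt (Nat.mod_lt _ hk) ht⟩) := by
  have hn : 0 < n := by omega
  rw [Finset.sum_image (fun x _ y _ h => he h)]
  refine Finset.sum_nbij' (fun s => s.val / n)
    (fun r => ⟨(r % k) * n + t, by rw [hm]; exact idx_lt (Nat.mod_lt _ hk) ht⟩)
    ?_ ?_ ?_ ?_ ?_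
  · intro s hs
    rw [Finset.mem_range]
    exact Nat.div_lt_of_lt_mul (by rw [Nat.mul_comm n k, ← hm]; exact s.isLt)
  · intro r hr
    simp only [Finset.mem_filter, Finset.mem_univ, true_and, hP]
    exact mod_fact ht
  · intro s hs
    simp only [Finset.mem_filter, Finset.mem_univ, true_and, hP] at hs
    have hlt : s.val / n < k := Nat.div_lt_of_lt_mul (by rw [Nat.mul_comm n k, ← hm]; exact s.isLt)
    apply Fin.ext
    simp only [Nat.mod_eq_of_lt hlt]
    rw [← hs, Nat.mul_comm]
    exact Nat.div_add_mod _ _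
  · intro r hr
    rw [Finset.mem_range] at hr
    simp only
    rw [Nat.mod_eq_of_lt hr, Nat.mul_comm, Nat.mul_add_div hn, Nat.div_eq_of_lt ht]
    omega
  · intro s hs
    simp only [Finset.mem_filter, Finset.mem_univ, true_and, hP] at hs
    have hlt : s.val / n < k := Nat.div_lt_of_lt_mul (by rw [Nat.mul_comm n k, ← hm]; exact s.isLt)
    refine congrArg w (congrArg e (Fin.ext ?_))
    simp only [Nat.mod_eq_of_lt hlt]
    rw [← hs, Nat.mul_comm]
    exact (Nat.div_add_mod _ _).symm

/-- When agent (residue `ti`) picks no later than residue `tj` in every round,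
her bundle is at least as valuable to her. -/
private lemma rr_direct {α : Type*} {n k ti tj : ℕ} (hk : 0 < k) (hti : ti < n) (htj : tj < n)
    (hij : ti ≤ tj) {m : ℕ} (hm : m = k * n) (e : Fin m → α) (w : α → ℝ)
    (hg : ∀ s s' : Fin m, s.val % n = ti → s ≤ s' → w (e s) ≥ w (e s')) :
    ∑ r ∈ Finset.range k,
        w (e ⟨(r % k) * n + ti, by rw [hm]; exact idx_lt (Nat.mod_lt _ hk) hti⟩)
      ≥ ∑ r ∈ Finset.range k,
        w (e ⟨(r % k) * n + tj, by rw [hm]; exact idx_lt (Nat.mod_lt _ hk) htj⟩) := by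
  refine Finset.sum_le_sum fun r hr => ?_
  exact hg _ _ (mod_fact hti) (Fin.mk_le_mk.mpr (by omega))

/-- When agent (residue `ti`) picks after residue `tj` in every round, dropping
her last pick makes her bundle at least as valuable to her as `tj`'s bundle. -/
private lemma rr_shift {α : Type*} {n k ti tj : ℕ} (hk : 0 < k) (hti : ti < n) (htj : tj < n)
    {m : ℕ} (hm : m = k * n) (e : Fin m → α) (w : α → ℝ) (hw : ∀ a, w a ≤ 0)
    (hg : ∀ s s' : Fin m, s.val % n = ti → s ≤ s' → w (e s) ≥ w (e s')) :
    (∑ r ∈ Finset.range k,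
        w (e ⟨(r % k) * n + ti, by rw [hm]; exact idx_lt (Nat.mod_lt _ hk) hti⟩))
      - w (e ⟨((k - 1) % k) * n + ti, by rw [hm]; exact idx_lt (Nat.mod_lt _ hk) hti⟩)
      ≥ ∑ r ∈ Finset.range k,
        w (e ⟨(r % k) * n + tj, by rw [hm]; exact idx_lt (Nat.mod_lt _ hk) htj⟩) := by
  obtain ⟨k', rfl⟩ : ∃ k', k = k' + 1 := ⟨k - 1, by omega⟩
  rw [Finset.sum_range_succ, Finset.sum_range_succ']
  simp only [Nat.add_sub_cancel]
  have hmain : ∀ r ∈ Finset.range k',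
      w (e ⟨((r + 1) % (k' + 1)) * n + tj, by
        rw [hm]; exact idx_lt (Nat.mod_lt _ hk) htj⟩)
      ≤ w (e ⟨(r % (k' + 1)) * n + ti, by
        rw [hm]; exact idx_lt (Nat.mod_lt _ hk) hti⟩) := by
    intro r hr
    rw [Finset.mem_range] at hr
    refine hg _ _ (mod_fact hti) (Fin.mk_le_mk.mpr ?_)
    rw [Nat.mod_eq_of_lt (by omega : r < k' + 1), Nat.mod_eq_of_lt (by omega : r + 1 < k' + 1)]
    have : (r + 1) * n = r * n + n := by ring
    omega
  have hsum := Finset.sum_le_sum hmain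
  have h0 : w (e ⟨(0 % (k' + 1)) * n + tj, by
      rw [hm]; exact idx_lt (Nat.mod_lt _ hk) htj⟩) ≤ 0 := hw _
  linarith

/-- Round-robin on chore set `O₁` (of size `k·n`) with picking order `1, …, n`
followed by round-robin on disjoint `O₂` (of size `k·n`) with order `n, …, 1`,
each picker taking a least-disliked remaining chore: the combined allocation is
EF1 for chores. -/
theorem stmt14 {α : Type*} [DecidableEq α] (n k : ℕ) (hn : 0 < n)
    (v : Fin n → α → ℝ) (hv : ∀ i a, v i a ≤ 0)
    (O₁ O₂ : Finset α) (hdisj : Disjoint O₁ O₂)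
    (hcard₁ : O₁.card = k * n) (hcard₂ : O₂.card = k * n)
    (A B : Fin n → Finset α)
    (hA : RRAlloc v O₁ (fun s => ⟨s % n, Nat.mod_lt _ hn⟩) A)
    (hB : RRAlloc v O₂ (fun s => ⟨n - 1 - s % n, by omega⟩) B) :
    ∀ i j : Fin n, A i ∪ B i = ∅ ∨
      ∃ c ∈ A i ∪ B i,
        ∑ x ∈ (A i ∪ B i).erase c, v i x ≥ ∑ x ∈ A j ∪ B j, v i x := by
  obtain ⟨e₁, he₁, hO₁, hA₁, hg₁⟩ := hA
  obtain ⟨e₂, he₂, hO₂, hA₂, hg₂⟩ := hB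
  have hsubA : ∀ x, A x ⊆ O₁ := by
    intro x a ha
    rw [hA₁] at ha
    obtain ⟨s, _, rfl⟩ := Finset.mem_image.mp ha
    exact hO₁ s
  have hsubB : ∀ x, B x ⊆ O₂ := by
    intro x a ha
    rw [hA₂] at ha
    obtain ⟨s, _, rfl⟩ := Finset.mem_image.mp ha
    exact hO₂ s
  intro i j
  rcases Nat.eq_zero_or_pos k with hk | hk
  · left
    subst hk
    have h1 : O₁ = ∅ := Finset.card_eq_zero.mp (by omega)
    have h2 : O₂ = ∅ := Finset.card_eq_zero.mp (by omega)
    have := Finset.union_subset_union (hsubA i) (hsubB i)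
    rw [h1, h2] at this
    simpa using this
  · right
    have hdAB : ∀ x y, Disjoint (A x) (B y) := fun x y => hdisj.mono (hsubA x) (hsubB y)
    -- residue bounds
    have hti2 : ∀ x : Fin n, n - 1 - x.val < n := by intro x; omega
    -- bundle sums, phase 1
    have hsum1 : ∀ x : Fin n, ∑ a ∈ A x, v i a
        = ∑ r ∈ Finset.range k,
            v i (e₁ ⟨(r % k) * n + x.val, by rw [hcard₁]; exact idx_lt (Nat.mod_lt _ hk) x.isLt⟩) := by
      intro x
      rw [hA₁ x]
      exact rr_sum hk x.isLt hcard₁ e₁ he₁ (v i) _ (fun s => by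
        constructor
        · intro h; exact congrArg Fin.val h
        · intro h; exact Fin.ext h)
    -- bundle sums, phase 2
    have hsum2 : ∀ x : Fin n, ∑ a ∈ B x, v i a
        = ∑ r ∈ Finset.range k,
            v i (e₂ ⟨(r % k) * n + (n - 1 - x.val), by
              rw [hcard₂]; exact idx_lt (Nat.mod_lt _ hk) (hti2 x)⟩) := by
      intro x
      rw [hA₂ x]
      refine rr_sum hk (hti2 x) hcard₂ e₂ he₂ (v i) _ (fun s => ?_)
      have hmod : s.val % n < n := Nat.mod_lt _ hn
      have hx : x.val < n := x.isLt
      constructor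
      · intro h
        have := congrArg Fin.val h
        simp only at this
        omega
      · intro h
        exact Fin.ext (by simp only; omega)
    -- greedy facts
    have hgi1 : ∀ s s' : Fin O₁.card, s.val % n = i.val → s ≤ s' →
        v i (e₁ s) ≥ v i (e₁ s') := by
      intro s s' hs hle
      have h := hg₁ s s' hle
      have hp : ((fun t : ℕ => (⟨t % n, Nat.mod_lt _ hn⟩ : Fin n)) s.val) = i := Fin.ext hs
      rwa [hp] at h
    have hgi2 : ∀ s s' : Fin O₂.card, s.val % n = n - 1 - i.val → s ≤ s' →
        v i (e₂ s) ≥ v i (e₂ s') := by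
      intro s s' hs hle
      have h := hg₂ s s' hle
      have hp : ((fun t : ℕ => (⟨n - 1 - t % n, by omega⟩ : Fin n)) s.val) = i := by
        apply Fin.ext
        have : i.val < n := i.isLt
        simp only
        omega
      rwa [hp] at h
    rcases le_or_gt i.val j.val with hij | hij
    · -- i picks no later than j in phase 1; drop i's last phase-2 pick
      set c := e₂ ⟨((k - 1) % k) * n + (n - 1 - i.val), by
        rw [hcard₂]; exact idx_lt (Nat.mod_lt _ hk) (hti2 i)⟩ with hc
      have hcB : c ∈ B i := by
        rw [hA₂ i]
        refine Finset.mem_image.mpr ⟨_, Finset.mem_filter.mpr ⟨Finset.mem_univ _, ?_⟩, rfl⟩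
        apply Fin.ext
        have : i.val < n := i.isLt
        have := mod_fact (n := n) (r := k - 1) (k := k) (t := n - 1 - i.val) (by omega)
        simp only
        omega
      have H1 : ∑ a ∈ A i, v i a ≥ ∑ a ∈ A j, v i a := by
        rw [hsum1 i, hsum1 j]
        exact rr_direct hk i.isLt j.isLt hij hcard₁ e₁ (v i) hgi1
      have H2 : (∑ a ∈ B i, v i a) - v i c ≥ ∑ a ∈ B j, v i a := by
        rw [hsum2 i, hsum2 j, hc]
        exact rr_shift hk (hti2 i) (hti2 j) hcard₂ e₂ (v i) (hv i) hgi2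
      refine ⟨c, Finset.mem_union_right _ hcB, ?_⟩
      rw [Finset.sum_erase_eq_sub (Finset.mem_union_right _ hcB),
        Finset.sum_union (hdAB i i), Finset.sum_union (hdAB j j)]
      linarith
    · -- j < i: i picks no later than j in phase 2; drop i's last phase-1 pick
      set c := e₁ ⟨((k - 1) % k) * n + i.val, by
        rw [hcard₁]; exact idx_lt (Nat.mod_lt _ hk) i.isLt⟩ with hc
      have hcA : c ∈ A i := by
        rw [hA₁ i]
        refine Finset.mem_image.mpr ⟨_, Finset.mem_filter.mpr ⟨Finset.mem_univ _, ?_⟩, rfl⟩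
        exact Fin.ext (mod_fact i.isLt)
      have H1 : (∑ a ∈ A i, v i a) - v i c ≥ ∑ a ∈ A j, v i a := by
        rw [hsum1 i, hsum1 j, hc]
        exact rr_shift hk i.isLt j.isLt hcard₁ e₁ (v i) (hv i) hgi1
      have H2 : ∑ a ∈ B i, v i a ≥ ∑ a ∈ B j, v i a := by
        rw [hsum2 i, hsum2 j]
        exact rr_direct hk (hti2 i) (hti2 j) (by omega) hcard₂ e₂ (v i) hgi2
      refine ⟨c, Finset.mem_union_left _ hcA, ?_⟩
      rw [Finset.sum_erase_eq_sub (Finset.mem_union_left _ hcA),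
        Finset.sum_union (hdAB i i), Finset.sum_union (hdAB j j)]
      linarith
end

section
/- Let two agents have additive valuations v_1, v_2 over items o_1, …, o_m arriving one per round, where for each item o either both v_1(o) ≤ 0 and v_2(o) ≤ 0, or both v_1(o) ≥ 0 and v_2(o) ≥ 0 (mixed manna with agreed signs). Define augmented valuations v'_i(o) = |v_i(o)|. Suppose B = (B_1, B_2) is an allocation that is TEF1 with respect to (v'_1, v'_2) treating all items as goods. Let G^t, C^t denote the goods and chores (under the original valuations) among the first t items, and define A by giving agent 1 the goods of B_1 and the chores of B_2, and agent 2 the goods of B_2 and the chores of B_1. Then A is TEF1 with respect to the original valuations: for every t and i ≠ j, there exists an item o ∈ A_i^t ∪ A_j^t with v_i(A_i^t \ {o}) ≥ v_i(A_j^t \ {o}). -/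
open Finset

/-- The other agent, for two agents. -/
def other : Fin 2 → Fin 2 := fun i => i + 1

/-- The mixed-manna allocation derived from `B`: each good keeps its owner, and
each chore is given to the other agent. -/
noncomputable def mixedAlloc {m : ℕ} (v : Fin 2 → Fin m → ℝ) (B : Fin m → Fin 2) (j : Fin m) : Fin 2 :=
  if 0 ≤ v 0 j ∧ 0 ≤ v 1 j then B j else other (B j)

/-!
Write `G(X)`, `C(X)` for the goods and chores of a bundle `X`, so that
`A_i = G(B_i) ∪ C(B_j)` and `A_j = G(B_j) ∪ C(B_i)`. Since `v'_i = v_i` on goods and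
`v'_i = -v_i` on chores, for every item `o`
`v_i(A_i \ o) - v_i(A_j \ o) = v'_i(B_i \ o) - v'_i(B_j \ o)`.
The item `o ∈ B_j` witnessing TEF1 of `B` lies outside `B_i`, so the right-hand side is
`v'_i(B_i) - v'_i(B_j \ o) ≥ 0`; if `B_j` is empty, the latest item `t` does the job.
-/

theorem sum_abs_eq_sum_filter_sub_sum_filter_not {α : Type*} (P : α → Prop) [DecidablePred P]
    {f : α → ℝ} (hP : ∀ x, P x → 0 ≤ f x) (hnP : ∀ x, ¬P x → f x ≤ 0) (X : Finset α) :
    ∑ x ∈ X, |f x| = ∑ x ∈ X.filter P, f x - ∑ x ∈ X.filter (¬P ·), f x := by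
  rw [← sum_filter_add_sum_filter_not X P, sub_eq_add_neg, ← sum_neg_distrib]
  congr 1
  · exact sum_congr rfl fun x hx => abs_of_nonneg (hP x (mem_filter.mp hx).2)
  · exact sum_congr rfl fun x hx => abs_of_nonpos (hnP x (mem_filter.mp hx).2)

theorem sum_swap_chores_sub {α : Type*} [DecidableEq α] (P : α → Prop) [DecidablePred P]
    {f : α → ℝ} (hP : ∀ x, P x → 0 ≤ f x) (hnP : ∀ x, ¬P x → f x ≤ 0) (X Y : Finset α) :
    ∑ x ∈ X.filter P ∪ Y.filter (¬P ·), f x - ∑ x ∈ Y.filter P ∪ X.filter (¬P ·), f x =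
      ∑ x ∈ X, |f x| - ∑ x ∈ Y, |f x| := by
  rw [sum_union (disjoint_filter_filter_not X Y P), sum_union (disjoint_filter_filter_not Y X P),
    sum_abs_eq_sum_filter_sub_sum_filter_not P hP hnP,
    sum_abs_eq_sum_filter_sub_sum_filter_not P hP hnP]
  ring

theorem other_eq_iff {i j c : Fin 2} (hij : i ≠ j) : other c = i ↔ c = j := by
  revert i j c; decide

theorem fin_two_eq_or_eq_of_ne {i j : Fin 2} (hij : i ≠ j) (c : Fin 2) : c = i ∨ c = j := by
  revert i j c; decide

section Bundles

variable {m : ℕ}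

theorem bundle_erase {n : ℕ} (A : Fin m → Fin n) (S : Finset (Fin m)) (i : Fin n) (o : Fin m) :
    bundle A (S.erase o) i = (bundle A S i).erase o :=
  filter_erase _ _ _

theorem bundle_union_bundle_of_ne (A : Fin m → Fin 2) (S : Finset (Fin m)) {i j : Fin 2}
    (hij : i ≠ j) : bundle A S i ∪ bundle A S j = S := by
  ext x
  simp only [bundle, mem_union, mem_filter, ← and_or_left, and_iff_left_iff_imp]
  exact fun _ => fin_two_eq_or_eq_of_ne hij (A x)

theorem notMem_bundle_of_mem_bundle {n : ℕ} {A : Fin m → Fin n} {S : Finset (Fin m)}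
    {i j : Fin n} (hij : i ≠ j) {o : Fin m} (ho : o ∈ bundle A S j) : o ∉ bundle A S i :=
  fun hi => hij ((mem_filter.mp hi).2.symm.trans (mem_filter.mp ho).2)

variable (v : Fin 2 → Fin m → ℝ) (B : Fin m → Fin 2)

theorem bundle_mixedAlloc (S : Finset (Fin m)) {i j : Fin 2} (hij : i ≠ j) :
    bundle (mixedAlloc v B) S i =
      (bundle B S i).filter (fun x => 0 ≤ v 0 x ∧ 0 ≤ v 1 x) ∪
        (bundle B S j).filter (fun x => ¬(0 ≤ v 0 x ∧ 0 ≤ v 1 x)) := by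
  ext x
  simp only [bundle, mem_union, mem_filter]
  unfold mixedAlloc
  by_cases hx : 0 ≤ v 0 x ∧ 0 ≤ v 1 x <;> simp [hx, other_eq_iff hij]

variable {v}

theorem bval_mixedAlloc_sub
    (hsign : ∀ j, (v 0 j ≤ 0 ∧ v 1 j ≤ 0) ∨ (0 ≤ v 0 j ∧ 0 ≤ v 1 j))
    (S : Finset (Fin m)) {i j : Fin 2} (hij : i ≠ j) :
    bval (v i) (bundle (mixedAlloc v B) S i) - bval (v i) (bundle (mixedAlloc v B) S j) =
      bval (fun x => |v i x|) (bundle B S i) - bval (fun x => |v i x|) (bundle B S j) := by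
  have hgood : ∀ x, 0 ≤ v 0 x ∧ 0 ≤ v 1 x → 0 ≤ v i x := fun x hx => by
    fin_cases i
    exacts [hx.1, hx.2]
  have hchore : ∀ x, ¬(0 ≤ v 0 x ∧ 0 ≤ v 1 x) → v i x ≤ 0 := fun x hx => by
    have hx' := (hsign x).resolve_right hx
    fin_cases i
    exacts [hx'.1, hx'.2]
  rw [bundle_mixedAlloc v B S hij, bundle_mixedAlloc v B S hij.symm]
  exact sum_swap_chores_sub _ hgood hchore _ _

end Bundles

/-- Two agents, mixed manna with agreed signs. If `B` is TEF1 for the augmented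
(absolute-value) valuations treating all items as goods, then the allocation that
keeps the goods and swaps the chores is TEF1 for the original valuations, in the
mixed-manna sense. -/
theorem stmt17 (m : ℕ) (v : Fin 2 → Fin m → ℝ)
    (hsign : ∀ j, (v 0 j ≤ 0 ∧ v 1 j ≤ 0) ∨ (0 ≤ v 0 j ∧ 0 ≤ v 1 j))
    (B : Fin m → Fin 2)
    (hB : ∀ t : Fin m, ∀ i j : Fin 2, i ≠ j →
      bundle B (Finset.univ.filter (fun o => o ≤ t)) j = ∅ ∨
      ∃ o ∈ bundle B (Finset.univ.filter (fun o => o ≤ t)) j,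
        bval (fun x => |v i x|) (bundle B (Finset.univ.filter (fun o => o ≤ t)) i) ≥
          bval (fun x => |v i x|)
            ((bundle B (Finset.univ.filter (fun o => o ≤ t)) j).erase o)) :
    ∀ t : Fin m, ∀ i j : Fin 2, i ≠ j →
      ∃ o ∈ bundle (mixedAlloc v B) (Finset.univ.filter (fun o => o ≤ t)) i ∪
            bundle (mixedAlloc v B) (Finset.univ.filter (fun o => o ≤ t)) j,
        bval (v i) ((bundle (mixedAlloc v B) (Finset.univ.filter (fun o => o ≤ t)) i).erase o) ≥
          bval (v i) ((bundle (mixedAlloc v B) (Finset.univ.filter (fun o => o ≤ t)) j).erase o) := by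
  intro t i j hij
  set S := Finset.univ.filter (fun o : Fin m => o ≤ t)
  obtain ⟨o, hoS, hle⟩ : ∃ o ∈ S, bval (fun x => |v i x|) (bundle B (S.erase o) j) ≤
      bval (fun x => |v i x|) (bundle B (S.erase o) i) := by
    simp_rw [bundle_erase]
    rcases hB t i j hij with hempty | ⟨o, ho, hle⟩
    · refine ⟨t, by simp [S], ?_⟩
      rw [hempty, erase_empty, bval, sum_empty]
      exact sum_nonneg fun x _ => abs_nonneg _
    · refine ⟨o, (mem_filter.mp ho).1, ?_⟩
      rwa [erase_eq_of_notMem (notMem_bundle_of_mem_bundle hij ho)]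
  refine ⟨o, (bundle_union_bundle_of_ne _ S hij).symm ▸ hoS, ?_⟩
  rw [← bundle_erase, ← bundle_erase]
  linarith [bval_mixedAlloc_sub B hsign (S.erase o) hij]
end

section
/- In the chores TEF1 algorithm for two agents (Algorithm 1), consider any round t and let r < t be the latest round before t after which the cumulative allocation is envy-free. If in the sub-allocation of chores arriving in rounds r+1, …, t−1, agent 1 envies agent 2 (i.e., v_1(A_1^{t−1} \ A_1^r) < v_1(A_2^{t−1} \ A_2^r)) and agent 2 does not envy agent 1, then allocating chore c_t to agent 2, and if both agents then envy each other in the sub-allocation, swapping the two agents' sub-bundles of chores from rounds r+1, …, t, preserves the EF1 property of the sub-allocation of chores arriving in rounds r+1, …, t. -/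
open Finset

/-- EF1 for chores of a pair of bundles (indexed by the two agents). -/
def EF1pairChores {m : ℕ} (v : Fin 2 → Fin m → ℝ) (C : Fin 2 → Finset (Fin m)) : Prop :=
  ∀ i j : Fin 2, C i = ∅ ∨
    ∃ c ∈ C i, ∑ x ∈ (C i).erase c, v i x ≥ ∑ x ∈ C j, v i x

/-- The swap step of the two-agent chores algorithm: if, in the current EF1
sub-allocation `(B₁, B₂)` of the chores of rounds `r+1,…,t−1`, agent 1 envies
agent 2 and agent 2 does not envy agent 1, then giving the new chore `c` to agent 2
— and swapping the two sub-bundles in case both agents would then envy each other —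
yields an EF1 sub-allocation of the chores of rounds `r+1,…,t`. -/
theorem stmt18 (m : ℕ) (v : Fin 2 → Fin m → ℝ) (hv : ∀ i j, v i j ≤ 0)
    (B₁ B₂ : Finset (Fin m)) (c : Fin m) (hc₁ : c ∉ B₁) (hc₂ : c ∉ B₂)
    (hdisj : Disjoint B₁ B₂)
    (hEF1 : EF1pairChores v ![B₁, B₂])
    (henvy1 : ∑ x ∈ B₁, v 0 x < ∑ x ∈ B₂, v 0 x)
    (hnoenvy2 : ∑ x ∈ B₂, v 1 x ≥ ∑ x ∈ B₁, v 1 x) :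
    EF1pairChores v
      (if (∑ x ∈ B₁, v 0 x < ∑ x ∈ insert c B₂, v 0 x ∧
           ∑ x ∈ insert c B₂, v 1 x < ∑ x ∈ B₁, v 1 x)
       then ![insert c B₂, B₁]
       else ![B₁, insert c B₂]) := by
  have key : ∀ (i : Fin 2) (S T : Finset (Fin m)),
      (∑ x ∈ T, v i x ≤ ∑ x ∈ S, v i x) →
      (S = ∅ ∨ ∃ a ∈ S, ∑ x ∈ S.erase a, v i x ≥ ∑ x ∈ T, v i x) := by
    intro i S T h
    rcases S.eq_empty_or_nonempty with hS | ⟨a, ha⟩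
    · exact Or.inl hS
    · refine Or.inr ⟨a, ha, ?_⟩
      have h2 := Finset.sum_erase_add S (v i) ha
      have := hv i a
      linarith
  have hins : ∀ i : Fin 2, ∑ x ∈ insert c B₂, v i x = v i c + ∑ x ∈ B₂, v i x :=
    fun i => Finset.sum_insert hc₂
  have herase : (insert c B₂).erase c = B₂ := Finset.erase_insert hc₂
  split_ifs with hcond
  · intro i j
    fin_cases i <;> fin_cases j <;>
      simp only [Fin.mk_zero, Fin.mk_one, Matrix.cons_val_zero, Matrix.cons_val_one, Matrix.head_cons]
    · exact key 0 _ _ le_rfl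
    · refine Or.inr ⟨c, Finset.mem_insert_self _ _, ?_⟩
      rw [herase]
      linarith
    · exact key 1 _ _ (le_of_lt hcond.2)
    · exact key 1 _ _ le_rfl
  · intro i j
    fin_cases i <;> fin_cases j <;>
      simp only [Fin.mk_zero, Fin.mk_one, Matrix.cons_val_zero, Matrix.cons_val_one, Matrix.head_cons]
    · exact key 0 _ _ le_rfl
    · rcases hEF1 0 1 with h | ⟨a, ha, h⟩
      · simp only [Matrix.cons_val_zero] at h
        exact Or.inl h
      · simp only [Fin.mk_zero, Fin.mk_one, Matrix.cons_val_zero, Matrix.cons_val_one, Matrix.head_cons] at ha h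
        refine Or.inr ⟨a, ha, ?_⟩
        have := hv 0 c
        rw [hins 0]
        linarith
    · refine Or.inr ⟨c, Finset.mem_insert_self _ _, ?_⟩
      rw [herase]
      linarith
    · exact key 1 _ _ le_rfl
end
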